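/- arXiv:2202.09613 — 13 statements merged into one kernel-verified Lean document; each statement's English description precedes it below -/
import Mathlib

section
/- Let (T,→) be a tournament whose automorphism group is transitive on vertices and transitive on arcs (i.e. ≤2-homogeneous), and suppose that for each vertex x the 3-cycle C_3 embeds into the out-neighbourhood x⁺ = {y : x → y}. Then C_3 also embeds into each in-neighbourhood x⁻ = {y : y → x}. -/
/-! Take a 3-cycle `a → b → c → a` (one exists in any out-neighbourhood). By arc-transitivity the
arc `a → b` lies on a 3-cycle `b → d → e → b` inside `a⁺`. Whichever way the arcs between `c` and
`d`, `e` point, one of `a d c`, `b d e`, `a b c` is a 3-cycle inside the in-neighbourhood of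
`e`, `c` or `d` respectively, and vertex-transitivity moves that vertex to any other. -/

namespace Tournament

variable {T : Type*} {r : T → T → Prop}

def InNbhdHasCycle (r : T → T → Prop) (x : T) : Prop :=
  ∃ a b c : T, a ≠ b ∧ b ≠ c ∧ a ≠ c ∧ r a x ∧ r b x ∧ r c x ∧ r a b ∧ r b c ∧ r c a

theorem InNbhdHasCycle.map {z : T} (g : r ≃r r) (h : InNbhdHasCycle r z) :
    InNbhdHasCycle r (g z) := by
  obtain ⟨a, b, c, ne_ab, ne_bc, ne_ac, haz, hbz, hcz, hab, hbc, hca⟩ := h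
  exact ⟨g a, g b, g c, g.injective.ne ne_ab, g.injective.ne ne_bc, g.injective.ne ne_ac,
    g.map_rel_iff.mpr haz, g.map_rel_iff.mpr hbz, g.map_rel_iff.mpr hcz,
    g.map_rel_iff.mpr hab, g.map_rel_iff.mpr hbc, g.map_rel_iff.mpr hca⟩

theorem inNbhdHasCycle_of_vertexTransitive
    (hvtrans : ∀ x y : T, ∃ g : r ≃r r, g x = y) {z : T} (hz : InNbhdHasCycle r z) (x : T) :
    InNbhdHasCycle r x := by
  obtain ⟨g, rfl⟩ := hvtrans z x
  exact hz.map g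

theorem exists_cycle_through_arc
    (harctrans : ∀ x y x' y' : T, r x y → r x' y' → ∃ g : r ≃r r, g x = x' ∧ g y = y')
    (hout : ∀ x : T, ∃ a b c : T, a ≠ b ∧ b ≠ c ∧ a ≠ c ∧
      r x a ∧ r x b ∧ r x c ∧ r a b ∧ r b c ∧ r c a)
    {a b : T} (hab : r a b) :
    ∃ d e : T, r a d ∧ r a e ∧ r b d ∧ r d e ∧ r e b := by
  obtain ⟨p, q, s, -, -, -, hap, haq, has, hpq, hqs, hsp⟩ := hout a
  obtain ⟨g, hga, hgp⟩ := harctrans a p a b hap hab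
  refine ⟨g q, g s, ?_, ?_, ?_, g.map_rel_iff.mpr hqs, ?_⟩
  · simpa [hga] using g.map_rel_iff.mpr haq
  · simpa [hga] using g.map_rel_iff.mpr has
  · simpa [hgp] using g.map_rel_iff.mpr hpq
  · simpa [hgp] using g.map_rel_iff.mpr hsp

theorem rel_of_not_rel (htour : ∀ x y : T, x ≠ y → (r x y ↔ ¬ r y x)) {u v : T} (huv : u ≠ v)
    (h : ¬ r u v) : r v u :=
  (htour v u huv.symm).mpr h

section Combinatorics

variable (hirr : ∀ x, ¬ r x x) (htour : ∀ x y : T, x ≠ y → (r x y ↔ ¬ r y x))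

include hirr

theorem ne_of_rel {u v : T} (h : r u v) : u ≠ v := by
  rintro rfl
  exact hirr u h

include htour

theorem not_rel_of_rel {u v : T} (h : r u v) : ¬ r v u :=
  (htour u v (ne_of_rel hirr h)).mp h

theorem exists_inNbhdHasCycle {a b c d e : T} (hab : r a b) (hbc : r b c) (hca : r c a)
    (had : r a d) (hae : r a e) (hbd : r b d) (hde : r d e) (heb : r e b) :
    ∃ z, InNbhdHasCycle r z := by
  have ne := @ne_of_rel _ _ hirr
  have ne_cd : c ≠ d := by rintro rfl; exact not_rel_of_rel hirr htour hca had
  have ne_ce : c ≠ e := by rintro rfl; exact not_rel_of_rel hirr htour hca hae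
  by_cases hdc : r d c
  · by_cases hce : r c e
    · exact ⟨e, a, d, c, ne had, ne hdc, (ne hca).symm, hae, hde, hce, had, hdc, hca⟩
    · have hec := rel_of_not_rel htour ne_ce hce
      exact ⟨c, b, d, e, ne hbd, ne hde, (ne heb).symm, hbc, hdc, hec, hbd, hde, heb⟩
  · have hcd := rel_of_not_rel htour ne_cd.symm hdc
    exact ⟨d, a, b, c, ne hab, ne hbc, (ne hca).symm, had, hbd, hcd, hab, hbc, hca⟩

end Combinatorics

end Tournament

open Tournament in
/-- In a vertex- and arc-transitive tournament in which every
out-neighbourhood contains a 3-cycle, every in-neighbourhood contains a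
3-cycle. -/
theorem stmt1 {T : Type*} (r : T → T → Prop)
    (hirr : ∀ x, ¬ r x x)
    (htour : ∀ x y : T, x ≠ y → (r x y ↔ ¬ r y x))
    (hvtrans : ∀ x y : T, ∃ g : T ≃ T, (∀ u v, r (g u) (g v) ↔ r u v) ∧ g x = y)
    (harctrans : ∀ x y x' y' : T, r x y → r x' y' →
      ∃ g : T ≃ T, (∀ u v, r (g u) (g v) ↔ r u v) ∧ g x = x' ∧ g y = y')
    (hout : ∀ x : T, ∃ a b c : T, a ≠ b ∧ b ≠ c ∧ a ≠ c ∧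
      r x a ∧ r x b ∧ r x c ∧ r a b ∧ r b c ∧ r c a) :
    ∀ x : T, ∃ a b c : T, a ≠ b ∧ b ≠ c ∧ a ≠ c ∧
      r a x ∧ r b x ∧ r c x ∧ r a b ∧ r b c ∧ r c a := by
  have hvtrans' : ∀ x y : T, ∃ g : r ≃r r, g x = y := fun x y => by
    obtain ⟨g, hg, hxy⟩ := hvtrans x y
    exact ⟨⟨g, hg _ _⟩, hxy⟩
  have harctrans' : ∀ x y x' y' : T, r x y → r x' y' → ∃ g : r ≃r r, g x = x' ∧ g y = y' :=
    fun x y x' y' hxy hxy' => by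
      obtain ⟨g, hg, hx, hy⟩ := harctrans x y x' y' hxy hxy'
      exact ⟨⟨g, hg _ _⟩, hx, hy⟩
  intro x
  obtain ⟨a, b, c, -, -, -, -, -, -, hab, hbc, hca⟩ := hout x
  obtain ⟨d, e, had, hae, hbd, hde, heb⟩ := exists_cycle_through_arc harctrans' hout hab
  obtain ⟨z, hz⟩ := exists_inNbhdHasCycle hirr htour hab hbc hca had hae hbd hde heb
  exact inNbhdHasCycle_of_vertexTransitive hvtrans' hz x
end

section
/- In any (k+1)-set-homogeneous k-uniform hypergraph whose automorphism group preserves a total order, for each i with 1 ≤ i ≤ k, either every (k+1)-element subset has a number of edges different from i, or there is a unique (k+1-i)-element subset J of {1,...,k+1} such that for every (k+1)-subset {u_1 < ... < u_{k+1}} carrying exactly i edges, the intersection of its edges consists exactly of the elements u_j with j ∈ J. -/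
open scoped Classical


section Aux

variable {H : Type*} [LinearOrder H] {k : ℕ} {E : Finset H → Prop} [DecidablePred E]

/-- A subset of card `k` of a `(k+1)`-set is an erase. -/
lemma aux_subset_eq_erase {U s : Finset H} (hU : U.card = k + 1) (hs : s ⊆ U)
    (hcard : s.card = k) : ∃ x ∈ U, s = U.erase x := by
  have h : (U \ s).Nonempty := by
    rw [Finset.sdiff_nonempty]
    intro h
    have := Finset.card_le_card h
    omega
  obtain ⟨x, hx⟩ := h
  rw [Finset.mem_sdiff] at hx
  refine ⟨x, hx.1, ?_⟩
  apply Finset.eq_of_subset_of_card_le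
  · intro y hy
    rw [Finset.mem_erase]
    exact ⟨fun h => hx.2 (h ▸ hy), hs hy⟩
  · rw [Finset.card_erase_of_mem hx.1, hU]
    omega

lemma aux_edge_eq_erase (huniform : ∀ s, E s → s.card = k) {U s : Finset H}
    (hU : U.card = k + 1) (hs : s ∈ U.powerset.filter E) : ∃ x ∈ U, s = U.erase x := by
  rw [Finset.mem_filter, Finset.mem_powerset] at hs
  exact aux_subset_eq_erase hU hs.1 (huniform s hs.2)

/-- The number of edges equals the number of "omitted" vertices. -/
lemma aux_card_edges (huniform : ∀ s, E s → s.card = k) {U : Finset H}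
    (hU : U.card = k + 1) :
    (U.powerset.filter E).card = (U.filter fun x => E (U.erase x)).card := by
  symm
  apply Finset.card_bij (fun x _ => U.erase x)
  · intro x hx
    rw [Finset.mem_filter] at hx
    rw [Finset.mem_filter, Finset.mem_powerset]
    exact ⟨Finset.erase_subset _ _, hx.2⟩
  · intro x hx y hy h
    rw [Finset.mem_filter] at hx hy
    by_contra hne
    have : x ∈ U.erase y := Finset.mem_erase.2 ⟨hne, hx.1⟩
    rw [← h] at this
    exact (Finset.mem_erase.1 this).1 rfl
  · intro s hs
    obtain ⟨x, hxU, rfl⟩ := aux_edge_eq_erase huniform hU hs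
    rw [Finset.mem_filter, Finset.mem_powerset] at hs
    exact ⟨x, Finset.mem_filter.2 ⟨hxU, hs.2⟩, rfl⟩

/-- The common intersection of all edges is the complement of the omitted vertices. -/
lemma aux_inter_eq (huniform : ∀ s, E s → s.card = k) {U : Finset H}
    (hU : U.card = k + 1) :
    (U.filter fun x => ∀ s ∈ U.powerset.filter E, x ∈ s)
      = U \ (U.filter fun x => E (U.erase x)) := by
  ext x
  simp only [Finset.mem_filter, Finset.mem_sdiff, Finset.mem_powerset, not_and]
  constructor
  · rintro ⟨hxU, h⟩
    refine ⟨hxU, fun _ hE => ?_⟩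
    have := h (U.erase x) ⟨Finset.erase_subset _ _, hE⟩
    exact (Finset.mem_erase.1 this).1 rfl
  · rintro ⟨hxU, h⟩
    refine ⟨hxU, fun s hs => ?_⟩
    by_contra hxs
    have hs' : s ∈ U.powerset.filter E := by
      rw [Finset.mem_filter, Finset.mem_powerset]; exact hs
    obtain ⟨y, hyU, rfl⟩ := aux_edge_eq_erase huniform hU hs'
    have : x = y := by
      by_contra hne
      exact hxs (Finset.mem_erase.2 ⟨hne, hxU⟩)
    subst this
    exact h hxU hs.2

/-- Transfer of the omitted-vertex set along an automorphism. -/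
lemma aux_D_image (g : H ≃ H) (hg : ∀ s : Finset H, E (s.image g) ↔ E s) (U : Finset H) :
    ((U.image g).filter fun x => E ((U.image g).erase x))
      = (U.filter fun x => E (U.erase x)).image g := by
  ext x
  simp only [Finset.mem_filter, Finset.mem_image]
  constructor
  · rintro ⟨⟨y, hyU, rfl⟩, hE⟩
    refine ⟨y, ⟨hyU, ?_⟩, rfl⟩
    rwa [← Finset.image_erase g.injective, hg] at hE
  · rintro ⟨y, ⟨hyU, hE⟩, rfl⟩
    exact ⟨⟨y, hyU, rfl⟩, by rwa [← Finset.image_erase g.injective, hg]⟩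

end Aux

section Aut

variable {H : Type*} [LinearOrder H] {k : ℕ} {E : Finset H → Prop} [DecidablePred E]

lemma aux_exists_map (huniform : ∀ s, E s → s.card = k) {U V : Finset H}
    (hU : U.card = k + 1) (hV : V.card = k + 1)
    (hcard : (U.powerset.filter E).card = (V.powerset.filter E).card) :
    ∃ f : H → H, Set.BijOn f ↑U ↑V ∧ ∀ s ⊆ U, (E s ↔ E (s.image f)) := by
  classical
  set DU : Finset H := U.filter (fun x => E (U.erase x)) with hDUdef
  set DV : Finset H := V.filter (fun x => E (V.erase x)) with hDVdef
  have hDUsub : DU ⊆ U := Finset.filter_subset _ _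
  have hDVsub : DV ⊆ V := Finset.filter_subset _ _
  have hDcard : DU.card = DV.card := by
    rw [← aux_card_edges huniform hU, ← aux_card_edges huniform hV]; exact hcard
  have hCcard : (U \ DU).card = (V \ DV).card := by
    rw [Finset.card_sdiff_of_subset hDUsub, Finset.card_sdiff_of_subset hDVsub, hU, hV, hDcard]
  set e1 : ↥DU ≃ ↥DV := Finset.equivOfCardEq hDcard with he1
  set e2 : ↥(U \ DU) ≃ ↥(V \ DV) := Finset.equivOfCardEq hCcard with he2
  set f : H → H := fun x =>
    if h : x ∈ DU then ((e1 ⟨x, h⟩ : ↥DV) : H)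
    else if h' : x ∈ U \ DU then ((e2 ⟨x, h'⟩ : ↥(V \ DV)) : H) else x with hfdef
  have hfD : ∀ x (h : x ∈ DU), f x = ((e1 ⟨x, h⟩ : ↥DV) : H) := by
    intro x h; simp only [hfdef, dif_pos h]
  have hfC : ∀ x (h : x ∈ U \ DU), f x = ((e2 ⟨x, h⟩ : ↥(V \ DV)) : H) := by
    intro x h
    have hx : x ∉ DU := (Finset.mem_sdiff.1 h).2
    simp only [hfdef, dif_neg hx, dif_pos h]
  have hfDmem : ∀ x (h : x ∈ DU), f x ∈ DV := fun x h => by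
    rw [hfD x h]; exact Finset.coe_mem _
  have hfCmem : ∀ x (h : x ∈ U \ DU), f x ∈ V \ DV := fun x h => by
    rw [hfC x h]; exact Finset.coe_mem _
  have hsplit : ∀ x, x ∈ U → x ∈ DU ∨ x ∈ U \ DU := by
    intro x hx
    by_cases h : x ∈ DU
    · exact Or.inl h
    · exact Or.inr (Finset.mem_sdiff.2 ⟨hx, h⟩)
  have hmaps : ∀ x ∈ U, f x ∈ V := by
    intro x hx
    rcases hsplit x hx with h | h
    · exact hDVsub (hfDmem x h)
    · exact (Finset.mem_sdiff.1 (hfCmem x h)).1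
  have hiff : ∀ x ∈ U, (x ∈ DU ↔ f x ∈ DV) := by
    intro x hx
    rcases hsplit x hx with h | h
    · exact ⟨fun _ => hfDmem x h, fun _ => h⟩
    · constructor
      · intro h'; exact absurd h' (Finset.mem_sdiff.1 h).2
      · intro h'; exact absurd h' (Finset.mem_sdiff.1 (hfCmem x h)).2
  have hinj : Set.InjOn f ↑U := by
    intro x hx y hy hxy
    rw [Finset.mem_coe] at hx hy
    rcases hsplit x hx with h | h <;> rcases hsplit y hy with h' | h'
    · rw [hfD x h, hfD y h'] at hxy
      have := e1.injective (Subtype.coe_injective hxy)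
      exact congrArg Subtype.val this
    · exfalso; rw [hfD x h] at hxy
      have : f y ∈ DV := by rw [← hxy]; exact Finset.coe_mem _
      exact (Finset.mem_sdiff.1 (hfCmem y h')).2 this
    · exfalso; rw [hfD y h'] at hxy
      have : f x ∈ DV := by rw [hxy]; exact Finset.coe_mem _
      exact (Finset.mem_sdiff.1 (hfCmem x h)).2 this
    · rw [hfC x h, hfC y h'] at hxy
      have := e2.injective (Subtype.coe_injective hxy)
      exact congrArg Subtype.val this
  have hsurj : ∀ y ∈ V, ∃ x ∈ U, f x = y := by
    intro y hy
    by_cases h : y ∈ DV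
    · obtain ⟨x, hx⟩ : ∃ x : ↥DU, e1 x = ⟨y, h⟩ := ⟨e1.symm ⟨y, h⟩, e1.apply_symm_apply _⟩
      refine ⟨(x : H), hDUsub x.2, ?_⟩
      rw [hfD _ x.2]
      simp only [Subtype.coe_eta, hx]
    · have h' : y ∈ V \ DV := Finset.mem_sdiff.2 ⟨hy, h⟩
      obtain ⟨x, hx⟩ : ∃ x : ↥(U \ DU), e2 x = ⟨y, h'⟩ := ⟨e2.symm ⟨y, h'⟩, e2.apply_symm_apply _⟩
      refine ⟨(x : H), (Finset.mem_sdiff.1 x.2).1, ?_⟩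
      rw [hfC _ x.2]
      simp only [Subtype.coe_eta, hx]
  refine ⟨f, ⟨fun x hx => hmaps x hx, fun x hx y hy h => hinj hx hy h, ?_⟩, ?_⟩
  · intro y hy
    rw [Finset.mem_coe] at hy
    obtain ⟨x, hxU, hfx⟩ := hsurj y hy
    exact ⟨x, hxU, hfx⟩
  · -- edge condition
    intro s hs
    have hscard : (s.image f).card = s.card :=
      Finset.card_image_of_injOn (hinj.mono (by exact_mod_cast hs))
    by_cases hk : s.card = k
    · obtain ⟨x, hxU, rfl⟩ := aux_subset_eq_erase hU hs hk
      have hfxV : f x ∈ V := hmaps x hxU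
      have himg : (U.erase x).image f = V.erase (f x) := by
        apply Finset.eq_of_subset_of_card_le
        · intro y hy
          obtain ⟨z, hz, rfl⟩ := Finset.mem_image.1 hy
          rw [Finset.mem_erase] at hz ⊢
          refine ⟨fun h => hz.1 (hinj (Finset.mem_coe.2 hz.2) (Finset.mem_coe.2 hxU) h), ?_⟩
          exact hmaps z hz.2
        · rw [hscard, hk, Finset.card_erase_of_mem hfxV, hV]
          omega
      rw [himg]
      have h1 : E (U.erase x) ↔ x ∈ DU := by
        constructor
        · intro h; exact Finset.mem_filter.2 ⟨hxU, h⟩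
        · intro h; exact (Finset.mem_filter.1 h).2
      have h2 : E (V.erase (f x)) ↔ f x ∈ DV := by
        constructor
        · intro h; exact Finset.mem_filter.2 ⟨hfxV, h⟩
        · intro h; exact (Finset.mem_filter.1 h).2
      rw [h1, h2]
      exact hiff x hxU
    · constructor
      · intro h; exact absurd (huniform s h) hk
      · intro h; exact absurd ((hscard.symm.trans (huniform _ h))) hk

end Aut


/-- In a (k+1)-set-homogeneous k-uniform hypergraph whose
automorphism group preserves a total order, for each `i` with `1 ≤ i ≤ k`,
either no (k+1)-set carries exactly i edges, or there is a unique set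
`J ⊆ {1,…,k+1}` of positions, of size `k+1-i`, such that on any increasing
(k+1)-tuple carrying exactly `i` edges, the common intersection of the edges
occupies exactly the positions in `J`. -/
theorem stmt2 {H : Type*} [LinearOrder H] (k : ℕ)
    (E : Finset H → Prop) [DecidablePred E]
    (huniform : ∀ s, E s → s.card = k)
    (hordinv : ∀ g : H ≃ H, (∀ s : Finset H, E (s.image g) ↔ E s) → StrictMono g)
    (hsethom : ∀ U V : Finset H, U.card = k + 1 → V.card = k + 1 →
      (∃ f : H → H, Set.BijOn f ↑U ↑V ∧ ∀ s ⊆ U, (E s ↔ E (s.image f))) →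
      ∃ g : H ≃ H, (∀ s : Finset H, E (s.image g) ↔ E s) ∧ U.image g = V) :
    ∀ i : ℕ, 1 ≤ i → i ≤ k →
      (∀ U : Finset H, U.card = k + 1 → (U.powerset.filter E).card ≠ i) ∨
      (∃! J : Finset (Fin (k + 1)), J.card = k + 1 - i ∧
        ∀ u : Fin (k + 1) → H, StrictMono u →
          ((Finset.univ.image u).powerset.filter E).card = i →
          (Finset.univ.image u).filter
              (fun x => ∀ s ∈ (Finset.univ.image u).powerset.filter E, x ∈ s)
            = J.image u) := by
  intro i hi1 hik
  by_cases hex : ∀ U : Finset H, U.card = k + 1 → (U.powerset.filter E).card ≠ i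
  · exact Or.inl hex
  right
  push_neg at hex
  obtain ⟨U₀, hU₀, hU₀i⟩ := hex
  classical
  set u₀ : Fin (k + 1) → H := ⇑(U₀.orderEmbOfFin hU₀) with hu₀def
  have hu₀mono : StrictMono u₀ := (U₀.orderEmbOfFin hU₀).strictMono
  have hu₀img : Finset.univ.image u₀ = U₀ := by
    rw [← Finset.coe_inj, Finset.coe_image, Finset.coe_univ, Set.image_univ]
    exact Finset.range_orderEmbOfFin U₀ hU₀
  set I₀ : Finset H := U₀.filter (fun x => ∀ s ∈ U₀.powerset.filter E, x ∈ s) with hI₀def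
  set J : Finset (Fin (k + 1)) := Finset.univ.filter (fun j => u₀ j ∈ I₀) with hJdef
  have hI₀J : J.image u₀ = I₀ := by
    ext x
    simp only [Finset.mem_image, hJdef, Finset.mem_filter, Finset.mem_univ, true_and]
    constructor
    · rintro ⟨j, hj, rfl⟩; exact hj
    · intro hx
      have hxU : x ∈ U₀ := (Finset.mem_filter.1 hx).1
      rw [← hu₀img] at hxU
      obtain ⟨j, _, rfl⟩ := Finset.mem_image.1 hxU
      exact ⟨j, hx, rfl⟩
  have hI₀card : I₀.card = k + 1 - i := by
    rw [hI₀def, aux_inter_eq huniform hU₀, Finset.card_sdiff_of_subset (Finset.filter_subset _ _),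
      hU₀, ← aux_card_edges huniform hU₀, hU₀i]
  have hJcard : J.card = k + 1 - i := by
    rw [← hI₀card, ← hI₀J, Finset.card_image_of_injective _ hu₀mono.injective]
  have hmain : ∀ u : Fin (k + 1) → H, StrictMono u →
      ((Finset.univ.image u).powerset.filter E).card = i →
      (Finset.univ.image u).filter
          (fun x => ∀ s ∈ (Finset.univ.image u).powerset.filter E, x ∈ s)
        = J.image u := by
    intro u hu hue
    set V := Finset.univ.image u with hVdef
    have hVcard : V.card = k + 1 := by
      rw [hVdef, Finset.card_image_of_injective _ hu.injective, Finset.card_univ,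
        Fintype.card_fin]
    obtain ⟨f, hbij, hcond⟩ := aux_exists_map huniform hU₀ hVcard (by rw [hU₀i, hue])
    obtain ⟨g, hg, himg⟩ := hsethom U₀ V hU₀ hVcard ⟨f, hbij, hcond⟩
    have hgmono := hordinv g hg
    have hrangeu : ∀ x, u x ∈ V := fun x => Finset.mem_image.2 ⟨x, Finset.mem_univ _, rfl⟩
    have hrangegu : ∀ x, g (u₀ x) ∈ V := by
      intro x
      rw [← himg]
      exact Finset.mem_image_of_mem g (Finset.orderEmbOfFin_mem U₀ hU₀ x)
    have hgu : (fun x => g (u₀ x)) = u := by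
      rw [Finset.orderEmbOfFin_unique hVcard hrangeu hu,
        Finset.orderEmbOfFin_unique hVcard hrangegu (hgmono.comp hu₀mono)]
    have hDV : (V.filter fun x => E (V.erase x))
        = (U₀.filter fun x => E (U₀.erase x)).image g := by
      rw [← himg]; exact aux_D_image g hg U₀
    have hIV : V.filter (fun x => ∀ s ∈ V.powerset.filter E, x ∈ s) = I₀.image g := by
      rw [aux_inter_eq huniform hVcard, hDV, ← himg,
        ← Finset.image_sdiff _ _ g.injective, hI₀def, aux_inter_eq huniform hU₀]
    have hfinal : Finset.image (⇑g) I₀ = Finset.image u J := by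
      rw [← hI₀J, Finset.image_image]
      exact congrArg (fun w => Finset.image w J) hgu
    rw [← hfinal]
    convert hIV using 2
  refine ⟨J, ⟨hJcard, hmain⟩, ?_⟩
  rintro J' ⟨hJ'card, hJ'⟩
  have h1 := hJ' u₀ hu₀mono (by rw [hu₀img]; exact hU₀i)
  have h2 := hmain u₀ hu₀mono (by rw [hu₀img]; exact hU₀i)
  exact (Finset.image_inj hu₀mono.injective).1 (h1.symm.trans h2)
end

section
/- If (M,C) is a C-set, i.e. C is a ternary relation on a set M satisfying the C-relation axioms (C1)-(C4), then for any element a ∈ M, the relation C_a defined on M∖{a} by C_a(x;y,z) ⟺ D(a,x;y,z), where D is the D-relation derived from C, satisfies axioms (C1)-(C4). -/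
/-- The cone relation `C_a(x;y,z) ⟺ D(a,x;y,z)` where `D` is the
D-relation derived from the C-relation `C`. -/
def coneRel {M : Type*} (C : M → M → M → Prop) (a : M) (x y z : M) : Prop :=
  (C a y z ∧ C x y z) ∨ (C y a x ∧ C z a x)

/-- If `C` is a C-relation on `M` (axioms (C1)-(C4)) and `a ∈ M`,
then the relation `C_a` on `M∖{a}` defined by `C_a(x;y,z) ⟺ D(a,x;y,z)`
(where `D` is the derived D-relation) satisfies axioms (C1)-(C4). -/
theorem stmt3 {M : Type*} (C : M → M → M → Prop)
    (hC1 : ∀ x y z, C x y z → C x z y)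
    (hC2 : ∀ x y z, C x y z → ¬ C y x z)
    (hC3 : ∀ x y z w, C x y z → C x w z ∨ C w y z)
    (hC4 : ∀ x y, x ≠ y → C x y y)
    (a : M) :
    (∀ x y z, x ≠ a → y ≠ a → z ≠ a →
      coneRel C a x y z → coneRel C a x z y) ∧
    (∀ x y z, x ≠ a → y ≠ a → z ≠ a →
      coneRel C a x y z → ¬ coneRel C a y x z) ∧
    (∀ x y z w, x ≠ a → y ≠ a → z ≠ a → w ≠ a →
      coneRel C a x y z → coneRel C a x w z ∨ coneRel C a w y z) ∧
    (∀ x y, x ≠ a → y ≠ a → x ≠ y → coneRel C a x y y) := by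
  refine ⟨?_, ?_, ?_, ?_⟩
  · rintro x y z _ _ _ (⟨h1, h2⟩ | ⟨h1, h2⟩)
    · exact Or.inl ⟨hC1 _ _ _ h1, hC1 _ _ _ h2⟩
    · exact Or.inr ⟨h2, h1⟩
  · rintro x y z _ _ _ (⟨h1, h2⟩ | ⟨h1, h2⟩) (⟨g1, g2⟩ | ⟨g1, g2⟩)
    · exact hC2 _ _ _ h2 g2
    · exact hC2 _ _ _ (hC1 _ _ _ h1) g2
    · exact hC2 _ _ _ (hC1 _ _ _ g1) h2
    · exact hC2 _ _ _ (hC1 _ _ _ h1) (hC1 _ _ _ g1)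
  · rintro x y z w _ _ _ _ (⟨h1, h2⟩ | ⟨h1, h2⟩)
    · rcases hC3 a y z w h1 with ha | ha
      · rcases hC3 x y z w h2 with hb | hb
        · exact Or.inl (Or.inl ⟨ha, hb⟩)
        · exact Or.inr (Or.inl ⟨h1, hb⟩)
      · exact Or.inr (Or.inl ⟨h1, ha⟩)
    · by_cases hwa : C w a x
      · exact Or.inl (Or.inr ⟨hwa, h2⟩)
      · have hy' : C y a w := by
          rcases hC3 y x a w (hC1 _ _ _ h1) with h | h
          · exact hC1 _ _ _ h
          · exact absurd (hC1 _ _ _ h) hwa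
        have hz' : C z a w := by
          rcases hC3 z x a w (hC1 _ _ _ h2) with h | h
          · exact hC1 _ _ _ h
          · exact absurd (hC1 _ _ _ h) hwa
        exact Or.inr (Or.inr ⟨hy', hz'⟩)
  · exact fun x y hx hy hxy => Or.inl ⟨hC4 a y fun h => hy h.symm, hC4 x y hxy⟩
end

section
/- Let (M,C,≤) be a totally ordered 2-regular C-set in which, for all x < y < z, C(x;y,z) or C(z;x,y) holds. Define a 3-uniform hypergraph edge relation E on M: a triple {x,y,z} of distinct elements is an edge iff (x < y ∧ x < z ∧ C(x;y,z)) ∨ (y < x ∧ y < z ∧ C(y;x,z)) ∨ (z < x ∧ z < y ∧ C(z;x,y)). Then the order < is definable from E: for distinct y,z, y < z holds iff there exist distinct u,v ∈ M∖{y,z} such that the only edges among {u,v,y,z} are {u,v,z} and {y,v,z}. Conclude Aut(M,E) ⊆ Aut(M,≤). -/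
/-- The 3-hypergraph edge relation derived from an ordered C-relation: a triple
of distinct points is an edge iff its least element `u` satisfies `C(u;·,·)` of
the other two. -/
def cEdge {M : Type*} [LT M] (C : M → M → M → Prop) (x y z : M) : Prop :=
  (x < y ∧ x < z ∧ C x y z) ∨ (y < x ∧ y < z ∧ C y x z) ∨ (z < x ∧ z < y ∧ C z x y)

/-- For the (strongly dense, 2-regular, compatible) ordered C-set
`(M,C,≤)` and the derived 3-hypergraph `E`, the order `<` is definable from
`E`: for distinct `y,z`, `y < z` iff there exist distinct `u,v ∉ {y,z}` such
that the only edges among `{u,v,y,z}` are `uvz` and `yvz`.  Consequently every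
automorphism of `(M,E)` preserves the order. -/
theorem stmt5 {M : Type*} [LinearOrder M] [DenselyOrdered M]
    [NoMinOrder M] [NoMaxOrder M]
    (C : M → M → M → Prop)
    (hC1 : ∀ x y z, C x y z → C x z y)
    (hC2 : ∀ x y z, C x y z → ¬ C y x z)
    (hC3 : ∀ x y z w, C x y z → C x w z ∨ C w y z)
    (hC4 : ∀ x y, x ≠ y → C x y y)
    (hreg : ∀ x y z : M, x ≠ y → x ≠ z → y ≠ z → C x y z ∨ C y x z ∨ C z x y)
    (hcompat : ∀ x y z : M, x < y → y < z → C x y z ∨ C z x y)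
    (hC8 : ∀ x y z, C x y z → ∃ w₁ w₂ : M,
      C w₁ y z ∧ C x y w₁ ∧ w₁ < min y z ∧
      C w₂ y z ∧ C x y w₂ ∧ max y z < w₂) :
    (∀ y z : M, y ≠ z →
      (y < z ↔ ∃ u v : M, u ≠ v ∧ u ≠ y ∧ u ≠ z ∧ v ≠ y ∧ v ≠ z ∧
        cEdge C u v z ∧ cEdge C y v z ∧ ¬ cEdge C u v y ∧ ¬ cEdge C u y z)) ∧
    (∀ g : M ≃ M, (∀ x y z : M, cEdge C (g x) (g y) (g z) ↔ cEdge C x y z) →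
      StrictMono g) := by
  -- exclusivity helper: C a b c and C c a b cannot both hold
  have trio2 : ∀ a b c, C a b c → ¬ C c a b := fun a b c h h' =>
    hC2 c a b h' (hC1 a b c h)
  -- permutation lemmas for cEdge
  have e12 : ∀ a b c, cEdge C a b c → cEdge C b a c := by
    intro a b c h
    rcases h with ⟨h1, h2, h3⟩ | ⟨h1, h2, h3⟩ | ⟨h1, h2, h3⟩
    · exact Or.inr (Or.inl ⟨h1, h2, h3⟩)
    · exact Or.inl ⟨h1, h2, h3⟩
    · exact Or.inr (Or.inr ⟨h2, h1, hC1 _ _ _ h3⟩)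
  have e23 : ∀ a b c, cEdge C a b c → cEdge C a c b := by
    intro a b c h
    rcases h with ⟨h1, h2, h3⟩ | ⟨h1, h2, h3⟩ | ⟨h1, h2, h3⟩
    · exact Or.inl ⟨h2, h1, hC1 _ _ _ h3⟩
    · exact Or.inr (Or.inr ⟨h1, h2, h3⟩)
    · exact Or.inr (Or.inl ⟨h1, h2, h3⟩)
  -- extraction lemmas for sorted triples
  have getT : ∀ a b c : M, a < b → b < c → cEdge C a b c → C a b c := by
    intro a b c hab hbc h
    rcases h with ⟨_, _, h⟩ | ⟨h1, _, _⟩ | ⟨h1, _, _⟩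
    · exact h
    · exact (lt_asymm hab h1).elim
    · exact (lt_asymm (hab.trans hbc) h1).elim
  have getF : ∀ a b c : M, a < b → b < c → ¬ cEdge C a b c → C c a b :=
    fun a b c hab hbc h =>
      (hcompat a b c hab hbc).resolve_left (fun hc => h (Or.inl ⟨hab, hab.trans hbc, hc⟩))
  have key : ∀ y z : M, y ≠ z →
      (y < z ↔ ∃ u v : M, u ≠ v ∧ u ≠ y ∧ u ≠ z ∧ v ≠ y ∧ v ≠ z ∧
        cEdge C u v z ∧ cEdge C y v z ∧ ¬ cEdge C u v y ∧ ¬ cEdge C u y z) := by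
    intro y z hyz
    constructor
    · -- forward direction: construct witnesses
      intro hlt
      obtain ⟨v, w₂, hv1, hv2, hv3, -, -, -⟩ := hC8 y z z (hC4 y z hyz)
      have hvz : v < z := by simpa using hv3
      have hCyvz : C y v z := hC1 y z v hv2
      have hvy' : v ≠ y := fun h =>
        hC2 y z y (h ▸ hv2) (hC4 z y (ne_of_lt hlt).symm)
      have hyv : y < v := by
        refine (hvy'.lt_or_gt).resolve_left (fun h => ?_)
        rcases hcompat v y z h hlt with hc | hc
        · exact hC2 v y z hc hCyvz
        · exact trio2 y v z hCyvz (hC1 z v y hc)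
      obtain ⟨u, w₂', hu1, hu2, hu3, -, -, -⟩ := hC8 v y y (hC4 v y hvy')
      have hu : u < y := by simpa using hu3
      have hCvuy : C v u y := hC1 v y u hu2
      have hCzuy : C z u y :=
        (hC3 v u y z hCvuy).resolve_left (fun hc => hC2 y v z hCyvz (hC1 v z y hc))
      have hCuvz : C u v z :=
        (hC3 y v z u hCyvz).resolve_left (fun hc => trio2 y u z hc (hC1 z u y hCzuy))
      have huv : u < v := hu.trans hyv
      refine ⟨u, v, ne_of_lt huv, ne_of_lt hu, ne_of_lt (huv.trans hvz), hvy',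
        ne_of_lt hvz, Or.inl ⟨huv, huv.trans hvz, hCuvz⟩, Or.inl ⟨hyv, hlt, hCyvz⟩,
        ?_, ?_⟩
      · exact fun h => trio2 u y v (getT u y v hu hyv (e23 u v y h)) hCvuy
      · exact fun h => trio2 u y z (getT u y z hu hlt h) hCzuy
    · -- backward direction
      rintro ⟨u, v, huv, huy, huz, hvy, hvz, h1, h2, h3, h4⟩
      by_contra hc
      have hzy : z < y := (hyz.lt_or_gt).resolve_left hc
      rcases huz.lt_or_gt with huz' | huz'
      · -- u < z
        rcases hvz.lt_or_gt with hvz' | hvz'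
        · -- v < z
          rcases huv.lt_or_gt with huv' | huv'
          · -- A : u < v < z < y
            have f1 : C u v z := getT u v z huv' hvz' h1
            have f2 : C v z y := getT v z y hvz' hzy (e23 v y z (e12 y v z h2))
            have f3 : C y u v := getF u v y huv' (hvz'.trans hzy) h3
            rcases hC3 y u v z f3 with h | h
            · exact hC2 v y z (hC1 v z y f2) (hC1 y z v h)
            · exact hC2 u z v (hC1 u v z f1) h
          · -- B : v < u < z < y
            have f1 : C v u z := getT v u z huv' huz' (e12 u v z h1)
            have f2 : C v z y := getT v z y (huv'.trans huz') hzy (e23 v y z (e12 y v z h2))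
            have f3 : C y v u := getF v u y huv' (huz'.trans hzy) (fun h => h3 (e12 v u y h))
            have f4 : C y u z := getF u z y huz' hzy (fun h => h4 (e23 u z y h))
            rcases hC3 y v u z f3 with h | h
            · rcases hC3 v z y u f2 with h' | h'
              · exact trio2 v u y h' f3
              · exact trio2 u z y h' f4
            · exact hC2 v z u (hC1 v u z f1) h
        · -- z < v
          rcases hvy.lt_or_gt with hvy' | hvy'
          · -- C : u < z < v < y
            have f2 : C z v y := getT z v y hvz' hvy' (e12 v z y (e23 v y z (e12 y v z h2)))
            have f3 : C y u v := getF u v y (huz'.trans hvz') hvy' h3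
            have f4 : C y u z := getF u z y huz' hzy (fun h => h4 (e23 u z y h))
            rcases hC3 z v y u f2 with h | h
            · exact trio2 z u y h (hC1 y u z f4)
            · exact trio2 u v y h f3
          · -- D : u < z < y < v
            have f1 : C u z v := getT u z v huz' (hzy.trans hvy') (e23 u v z h1)
            have f2 : C z y v := getT z y v hzy hvy' (e12 y z v (e23 y v z h2))
            have f3 : C v u y := getF u y v (huz'.trans hzy) hvy' (fun h => h3 (e23 u y v h))
            rcases hC3 u z v y f1 with h | h
            · exact trio2 u y v h f3
            · exact hC2 z y v f2 h
      · -- z < u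
        rcases huy.lt_or_gt with huy' | huy'
        · -- z < u < y
          rcases hvz.lt_or_gt with hvz' | hvz'
          · -- E : v < z < u < y
            have f1 : C v z u := getT v z u hvz' huz' (e23 v u z (e12 u v z h1))
            have f2 : C v z y := getT v z y hvz' hzy (e23 v y z (e12 y v z h2))
            have f3 : C y v u := getF v u y (hvz'.trans huz') huy' (fun h => h3 (e12 v u y h))
            have f4 : C y z u := getF z u y huz' huy'
              (fun h => h4 (e23 u z y (e12 z u y h)))
            rcases hC3 y v u z f3 with h | h
            · rcases hC3 v z y u f2 with h' | h'
              · exact trio2 v u y h' f3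
              · exact trio2 u z y h' (hC1 y z u f4)
            · exact hC2 v z u f1 h
          · -- z < v
            rcases hvy.lt_or_gt with hvy' | hvy'
            · -- z < v < y and z < u < y : split on u, v
              rcases huv.lt_or_gt with huv' | huv'
              · -- G : z < u < v < y
                have f1 : C z u v := getT z u v huz' huv' (e12 u z v (e23 u v z h1))
                have f2 : C z v y := getT z v y hvz' hvy'
                  (e12 v z y (e23 v y z (e12 y v z h2)))
                have f3 : C y u v := getF u v y huv' hvy' h3
                have f4 : C y z u := getF z u y huz' huy'
                  (fun h => h4 (e23 u z y (e12 z u y h)))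
                rcases hC3 y z u v f4 with h | h
                · rcases hC3 z v y u f2 with h' | h'
                  · exact trio2 z u y h' f4
                  · exact trio2 u v y h' f3
                · exact hC2 z v u (hC1 z u v f1) h
              · -- H : z < v < u < y
                have f1 : C z v u := getT z v u hvz' huv'
                  (e12 v z u (e23 v u z (e12 u v z h1)))
                have f2 : C z v y := getT z v y hvz' hvy'
                  (e12 v z y (e23 v y z (e12 y v z h2)))
                have f3 : C y v u := getF v u y huv' huy' (fun h => h3 (e12 v u y h))
                have f4 : C y z u := getF z u y huz' huy'
                  (fun h => h4 (e23 u z y (e12 z u y h)))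
                rcases hC3 y z u v f4 with h | h
                · rcases hC3 z v y u f2 with h' | h'
                  · exact trio2 z u y h' f4
                  · exact trio2 u v y h' (hC1 y v u f3)
                · exact hC2 z v u f1 h
            · -- I : z < u < y < v
              have f1 : C z u v := getT z u v huz' (huy'.trans hvy')
                (e12 u z v (e23 u v z h1))
              have f3 : C v u y := getF u y v huy' hvy' (fun h => h3 (e23 u y v h))
              have f4 : C y z u := getF z u y huz' huy'
                (fun h => h4 (e23 u z y (e12 z u y h)))
              rcases hC3 y z u v f4 with h | h
              · exact trio2 v u y f3 h
              · exact hC2 z v u (hC1 z u v f1) h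
        · -- y < u
          rcases hvz.lt_or_gt with hvz' | hvz'
          · -- F : v < z < y < u
            have f1 : C v z u := getT v z u hvz' (hzy.trans huy')
              (e23 v u z (e12 u v z h1))
            have f2 : C v z y := getT v z y hvz' hzy (e23 v y z (e12 y v z h2))
            have f3 : C u v y := getF v y u (hvz'.trans hzy) huy'
              (fun h => h3 (e23 u y v (e12 y u v (e23 y v u (e12 v y u h)))))
            have f4 : C u z y := getF z y u hzy huy'
              (fun h => h4 (e12 y u z (e23 y z u (e12 z y u h))))
            rcases hC3 u v y z f3 with h | h
            · rcases hC3 v z u y f1 with h' | h'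
              · exact trio2 v y u h' f3
              · exact trio2 y z u h' (hC1 u z y f4)
            · exact hC2 v z y f2 h
          · -- z < v
            rcases hvy.lt_or_gt with hvy' | hvy'
            · -- J : z < v < y < u
              have f1 : C z v u := getT z v u hvz' (hvy'.trans huy')
                (e12 v z u (e23 v u z (e12 u v z h1)))
              have f2 : C z v y := getT z v y hvz' hvy'
                (e12 v z y (e23 v y z (e12 y v z h2)))
              have f3 : C u v y := getF v y u hvy' huy'
                (fun h => h3 (e23 u y v (e12 y u v (e23 y v u (e12 v y u h)))))
              have f4 : C u z y := getF z y u hzy huy'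
                (fun h => h4 (e12 y u z (e23 y z u (e12 z y u h))))
              rcases hC3 z v u y f1 with h | h
              · exact trio2 z y u h f4
              · exact trio2 u v y f3 (hC1 y v u h)
            · -- y < v
              rcases huv.lt_or_gt with huv' | huv'
              · -- K : z < y < u < v
                have f2 : C z y v := getT z y v hzy (huy'.trans huv')
                  (e12 y z v (e23 y v z h2))
                have f3 : C v y u := getF y u v huy' huv'
                  (fun h => h3 (e23 u y v (e12 y u v h)))
                have f4 : C u z y := getF z y u hzy huy'
                  (fun h => h4 (e12 y u z (e23 y z u (e12 z y u h))))
                rcases hC3 u z y v f4 with h | h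
                · exact hC2 v u y (hC1 v y u f3) h
                · exact hC2 z v y (hC1 z y v f2) h
              · -- L : z < y < v < u
                have f1 : C z v u := getT z v u (hzy.trans hvy') huv'
                  (e12 v z u (e23 v u z (e12 u v z h1)))
                have f2 : C z y v := getT z y v hzy hvy' (e12 y z v (e23 y v z h2))
                have f3 : C u y v := getF y v u hvy' huv'
                  (fun h => h3 (e23 u y v (e12 y u v (e23 y v u h))))
                have f4 : C u z y := getF z y u hzy (hvy'.trans huv')
                  (fun h => h4 (e12 y u z (e23 y z u (e12 z y u h))))
                rcases hC3 u z y v f4 with h | h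
                · rcases hC3 z v u y f1 with h' | h'
                  · exact trio2 z y u h' f4
                  · exact trio2 u v y h (hC1 y v u h')
                · exact hC2 z v y (hC1 z y v f2) h
  refine ⟨key, ?_⟩
  intro g hg a b hab
  obtain ⟨u, v, huv, huy, huz, hvy, hvz, h1, h2, h3, h4⟩ :=
    (key a b (ne_of_lt hab)).mp hab
  exact (key (g a) (g b) (fun h => (ne_of_lt hab) (g.injective h))).mpr
    ⟨g u, g v, g.injective.ne huv, g.injective.ne huy, g.injective.ne huz,
      g.injective.ne hvy, g.injective.ne hvz,
      (hg u v b).mpr h1, (hg a v b).mpr h2,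
      fun h => h3 ((hg u v a).mp h), fun h => h4 ((hg u a b).mp h)⟩
end

section
/- With (M,C,≤) and the edge relation E as above (edge {x,y,z} iff the ≤-least element u of the triple satisfies C(u; other two)), the relation C is definable from E and ≤: C(x;y,z) holds iff (y = z ∧ x ≠ y), or (x,y,z distinct, x < min{y,z}, and E(x,y,z)), or (x,y,z distinct, max{y,z} < x, y ≠ z, and ¬E(x,y,z)). -/
/-- In a totally ordered 2-regular compatible C-set, the relation
`C` is definable from the derived edge relation `E` and the order:
`C(x;y,z)` iff `y = z ∧ x ≠ y`, or `x,y,z` are distinct with `x < min{y,z}`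
and `E(x,y,z)`, or `x,y,z` are distinct with `max{y,z} < x` and `¬E(x,y,z)`. -/
theorem stmt6 {M : Type*} [LinearOrder M]
    (C : M → M → M → Prop)
    (hC1 : ∀ x y z, C x y z → C x z y)
    (hC2 : ∀ x y z, C x y z → ¬ C y x z)
    (hC3 : ∀ x y z w, C x y z → C x w z ∨ C w y z)
    (hC4 : ∀ x y, x ≠ y → C x y y)
    (hreg : ∀ x y z : M, x ≠ y → x ≠ z → y ≠ z → C x y z ∨ C y x z ∨ C z x y)
    (hcompat : ∀ x y z : M, x < y → y < z → C x y z ∨ C z x y) :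
    ∀ x y z : M, C x y z ↔
      (y = z ∧ x ≠ y) ∨
      (x ≠ y ∧ x ≠ z ∧ y ≠ z ∧ x < min y z ∧ cEdge C x y z) ∨
      (x ≠ y ∧ x ≠ z ∧ y ≠ z ∧ max y z < x ∧ ¬ cEdge C x y z) := by
  intro x y z
  constructor
  · intro h
    have hxy : x ≠ y := by rintro rfl; exact hC2 _ _ _ h h
    have hxz : x ≠ z := by rintro rfl; exact hC2 _ _ _ (hC1 _ _ _ h) (hC1 _ _ _ h)
    by_cases hyz : y = z
    · exact Or.inl ⟨hyz, hxy⟩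
    · have hnyx : ¬ C y x z := hC2 _ _ _ h
      have hnzx : ¬ C z x y := hC2 _ _ _ (hC1 _ _ _ h)
      rcases lt_or_gt_of_ne hxy with h1 | h1
      · rcases lt_or_gt_of_ne hxz with h2 | h2
        · exact Or.inr (Or.inl ⟨hxy, hxz, hyz, lt_min h1 h2, Or.inl ⟨h1, h2, h⟩⟩)
        · rcases hcompat z x y h2 h1 with hc | hc
          · exact absurd hc hnzx
          · exact absurd (hC1 _ _ _ hc) hnyx
      · rcases lt_or_gt_of_ne hxz with h2 | h2
        · rcases hcompat y x z h1 h2 with hc | hc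
          · exact absurd hc hnyx
          · exact absurd (hC1 _ _ _ hc) hnzx
        · refine Or.inr (Or.inr ⟨hxy, hxz, hyz, max_lt h1 h2, ?_⟩)
          rintro (⟨hl, _⟩ | ⟨_, _, hc⟩ | ⟨_, _, hc⟩)
          · exact absurd hl (not_lt.2 h1.le)
          · exact hnyx hc
          · exact hnzx hc
  · rintro (⟨rfl, hxy⟩ | ⟨hxy, hxz, hyz, hmin, he⟩ | ⟨hxy, hxz, hyz, hmax, hne⟩)
    · exact hC4 _ _ hxy
    · obtain ⟨h1, h2⟩ := lt_min_iff.mp hmin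
      rcases he with ⟨_, _, h⟩ | ⟨hl, _, _⟩ | ⟨hl, _, _⟩
      · exact h
      · exact absurd hl (not_lt.2 h1.le)
      · exact absurd hl (not_lt.2 h2.le)
    · obtain ⟨h1, h2⟩ := max_lt_iff.mp hmax
      rcases lt_or_gt_of_ne hyz with h3 | h3
      · rcases hcompat y z x h3 h2 with hc | hc
        · exact absurd (Or.inr (Or.inl ⟨h1, h3, hC1 _ _ _ hc⟩)) hne
        · exact hc
      · rcases hcompat z y x h3 h1 with hc | hc
        · exact absurd (Or.inr (Or.inr ⟨h2, h3, hC1 _ _ _ hc⟩)) hne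
        · exact hC1 _ _ _ hc
end

section
/- Let (N,E) be a 3-uniform hypergraph with a total order < invariant under Aut(N,E), which is ≤4-set-homogeneous, contains at least one edge and one non-edge, and satisfies: every 4-set with exactly 2 edges, listed in increasing order u_1<u_2<u_3<u_4, has its two edges intersecting in {u_3,u_4}; every 4-set with exactly 1 edge has that edge equal to {u_1,u_2,u_3}; every 4-set with exactly 3 edges has the common intersection {u_1} (i.e. its unique non-edge is {u_2,u_3,u_4}). Then the relation C defined by: C(x;y,z) iff (y=z ∧ x≠y) or (x,y,z distinct ∧ x < min{y,z} ∧ Exyz) or (x,y,z distinct ∧ max{y,z} < x ∧ ¬Exyz), satisfies C-relation axioms (C1), (C2), (C3) and (C4). -/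
set_option linter.unusedTactic false


/-- The candidate C-relation reconstructed from an ordered 3-hypergraph:
`C(x;y,z)` iff `y = z ∧ x ≠ y`, or `x,y,z` distinct with `x` below both and
`E x y z`, or `x,y,z` distinct with `x` above both and `¬ E x y z`. -/
def crel {N : Type*} [LT N] (E : N → N → N → Prop) (x y z : N) : Prop :=
  (y = z ∧ x ≠ y) ∨
  (x ≠ y ∧ x ≠ z ∧ y ≠ z ∧ x < y ∧ x < z ∧ E x y z) ∨
  (x ≠ y ∧ x ≠ z ∧ y ≠ z ∧ y < x ∧ z < x ∧ ¬ E x y z)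

section CrelAux

variable {N : Type*} [LinearOrder N] (E : N → N → N → Prop)

lemma crel_eperm (hsymm : ∀ x y z : N, E x y z → E x z y ∧ E y x z)
    (x y z : N) (h : E x y z) :
    E x z y ∧ E y x z ∧ E y z x ∧ E z x y ∧ E z y x := by
  obtain ⟨a, b⟩ := hsymm x y z h
  obtain ⟨c, _⟩ := hsymm y x z b
  obtain ⟨_, f⟩ := hsymm x z y a
  obtain ⟨g, _⟩ := hsymm z x y f
  exact ⟨a, b, c, f, g⟩

variable [inst : ∀ x y z : N, Decidable (E x y z)]
variable
    (hone : ∀ u₁ u₂ u₃ u₄ : N, u₁ < u₂ → u₂ < u₃ → u₃ < u₄ →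
      ((if E u₁ u₂ u₃ then 1 else 0) + (if E u₁ u₂ u₄ then 1 else 0) +
       (if E u₁ u₃ u₄ then 1 else 0) + (if E u₂ u₃ u₄ then 1 else 0) = 1) →
      E u₁ u₂ u₃)
    (htwo : ∀ u₁ u₂ u₃ u₄ : N, u₁ < u₂ → u₂ < u₃ → u₃ < u₄ →
      ((if E u₁ u₂ u₃ then 1 else 0) + (if E u₁ u₂ u₄ then 1 else 0) +
       (if E u₁ u₃ u₄ then 1 else 0) + (if E u₂ u₃ u₄ then 1 else 0) = 2) →
      E u₁ u₃ u₄ ∧ E u₂ u₃ u₄)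
    (hthree : ∀ u₁ u₂ u₃ u₄ : N, u₁ < u₂ → u₂ < u₃ → u₃ < u₄ →
      ((if E u₁ u₂ u₃ then 1 else 0) + (if E u₁ u₂ u₄ then 1 else 0) +
       (if E u₁ u₃ u₄ then 1 else 0) + (if E u₂ u₃ u₄ then 1 else 0) = 3) →
      ¬ E u₂ u₃ u₄)

include hone htwo hthree in
lemma crel_classify4 (u₁ u₂ u₃ u₄ : N) (h12 : u₁ < u₂) (h23 : u₂ < u₃) (h34 : u₃ < u₄) :
    (¬E u₁ u₂ u₃ ∧ ¬E u₁ u₂ u₄ ∧ ¬E u₁ u₃ u₄ ∧ ¬E u₂ u₃ u₄) ∨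
    (E u₁ u₂ u₃ ∧ ¬E u₁ u₂ u₄ ∧ ¬E u₁ u₃ u₄ ∧ ¬E u₂ u₃ u₄) ∨
    (¬E u₁ u₂ u₃ ∧ ¬E u₁ u₂ u₄ ∧ E u₁ u₃ u₄ ∧ E u₂ u₃ u₄) ∨
    (E u₁ u₂ u₃ ∧ E u₁ u₂ u₄ ∧ E u₁ u₃ u₄ ∧ ¬E u₂ u₃ u₄) ∨
    (E u₁ u₂ u₃ ∧ E u₁ u₂ u₄ ∧ E u₁ u₃ u₄ ∧ E u₂ u₃ u₄) := by
  by_cases h1 : E u₁ u₂ u₃ <;> by_cases h2 : E u₁ u₂ u₄ <;>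
    by_cases h3 : E u₁ u₃ u₄ <;> by_cases h4 : E u₂ u₃ u₄ <;>
    first
    | exact Or.inl ⟨h1, h2, h3, h4⟩
    | exact Or.inr (Or.inl ⟨h1, h2, h3, h4⟩)
    | exact Or.inr (Or.inr (Or.inl ⟨h1, h2, h3, h4⟩))
    | exact Or.inr (Or.inr (Or.inr (Or.inl ⟨h1, h2, h3, h4⟩)))
    | exact Or.inr (Or.inr (Or.inr (Or.inr ⟨h1, h2, h3, h4⟩)))
    | (refine absurd (hone u₁ u₂ u₃ u₄ h12 h23 h34 ?_) h1; norm_num [h1, h2, h3, h4]; done)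
    | (refine absurd (htwo u₁ u₂ u₃ u₄ h12 h23 h34 ?_).1 h3; norm_num [h1, h2, h3, h4]; done)
    | (refine absurd (htwo u₁ u₂ u₃ u₄ h12 h23 h34 ?_).2 h4; norm_num [h1, h2, h3, h4]; done)
    | (refine absurd h4 (hthree u₁ u₂ u₃ u₄ h12 h23 h34 ?_); norm_num [h1, h2, h3, h4]; done)

variable (hsymm : ∀ x y z : N, E x y z → E x z y ∧ E y x z)

include hone htwo hthree hsymm in
lemma crel_keyB (x y z w : N)
    (hyz : y ≠ z) (hwx : w ≠ x) (hwy : w ≠ y) (hwz : w ≠ z)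
    (h1 : x < y) (h2 : x < z) (he : E x y z) :
    (x < w ∧ E x w z) ∨ (w < y ∧ w < z ∧ E w y z) ∨ (y < w ∧ z < w ∧ ¬ E w y z) := by
  have ep := crel_eperm E hsymm
  rcases hyz.lt_or_gt with hyz' | hyz'
  · -- y < z
    rcases hwx.lt_or_gt with hw | hw
    · -- w < x : quadruple (w, x, y, z), known e₄ = E x y z
      rcases crel_classify4 E hone htwo hthree w x y z hw h1 hyz' with
        ⟨_, _, _, h4⟩ | ⟨_, _, _, h4⟩ | ⟨_, _, h3', _⟩ | ⟨_, _, _, h4⟩ | ⟨_, _, h3', _⟩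
      · exact absurd he h4
      · exact absurd he h4
      · exact Or.inr (Or.inl ⟨hw.trans h1, hw.trans h2, h3'⟩)
      · exact absurd he h4
      · exact Or.inr (Or.inl ⟨hw.trans h1, hw.trans h2, h3'⟩)
    · rcases hwy.lt_or_gt with hw2 | hw2
      · -- x < w < y < z : quadruple (x, w, y, z), known e₃ = E x y z
        rcases crel_classify4 E hone htwo hthree x w y z hw hw2 hyz' with
          ⟨_, _, h3', _⟩ | ⟨_, _, h3', _⟩ | ⟨_, _, _, h4'⟩ | ⟨_, h2', _, _⟩ | ⟨_, h2', _, _⟩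
        · exact absurd he h3'
        · exact absurd he h3'
        · exact Or.inr (Or.inl ⟨hw2, hw2.trans hyz', h4'⟩)
        · exact Or.inl ⟨hw, h2'⟩
        · exact Or.inl ⟨hw, h2'⟩
      · rcases hwz.lt_or_gt with hw3 | hw3
        · -- y < w < z : quadruple (x, y, w, z), known e₂ = E x y z
          rcases crel_classify4 E hone htwo hthree x y w z h1 hw2 hw3 with
            ⟨_, h2', _, _⟩ | ⟨_, h2', _, _⟩ | ⟨_, h2', _, _⟩ | ⟨_, _, h3', _⟩ | ⟨_, _, h3', _⟩
          · exact absurd he h2'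
          · exact absurd he h2'
          · exact absurd he h2'
          · exact Or.inl ⟨h1.trans hw2, h3'⟩
          · exact Or.inl ⟨h1.trans hw2, h3'⟩
        · -- z < w : quadruple (x, y, z, w), known e₁ = E x y z
          rcases crel_classify4 E hone htwo hthree x y z w h1 hyz' hw3 with
            ⟨h1', _, _, _⟩ | ⟨_, _, _, h4'⟩ | ⟨h1', _, _, _⟩ | ⟨_, _, h3', h4'⟩ | ⟨_, _, h3', _⟩
          · exact absurd he h1'
          · exact Or.inr (Or.inr ⟨hw2, hw3, fun h => h4' (ep w y z h).2.2.1⟩)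
          · exact absurd he h1'
          · exact Or.inr (Or.inr ⟨hw2, hw3, fun h => h4' (ep w y z h).2.2.1⟩)
          · exact Or.inl ⟨h2.trans hw3, (ep x z w h3').1⟩
  · -- z < y
    have he' : E x z y := (ep x y z he).1
    rcases hwx.lt_or_gt with hw | hw
    · -- w < x : quadruple (w, x, z, y), known e₄ = E x z y
      rcases crel_classify4 E hone htwo hthree w x z y hw h2 hyz' with
        ⟨_, _, _, h4⟩ | ⟨_, _, _, h4⟩ | ⟨_, _, h3', _⟩ | ⟨_, _, _, h4⟩ | ⟨_, _, h3', _⟩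
      · exact absurd he' h4
      · exact absurd he' h4
      · exact Or.inr (Or.inl ⟨hw.trans h1, hw.trans h2, (ep w z y h3').1⟩)
      · exact absurd he' h4
      · exact Or.inr (Or.inl ⟨hw.trans h1, hw.trans h2, (ep w z y h3').1⟩)
    · rcases hwz.lt_or_gt with hw2 | hw2
      · -- x < w < z < y : quadruple (x, w, z, y), known e₃ = E x z y
        rcases crel_classify4 E hone htwo hthree x w z y hw hw2 hyz' with
          ⟨_, _, h3', _⟩ | ⟨_, _, h3', _⟩ | ⟨_, _, _, h4'⟩ | ⟨h1', _, _, _⟩ | ⟨h1', _, _, _⟩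
        · exact absurd he' h3'
        · exact absurd he' h3'
        · exact Or.inr (Or.inl ⟨hw2.trans hyz', hw2, (ep w z y h4').1⟩)
        · exact Or.inl ⟨hw, h1'⟩
        · exact Or.inl ⟨hw, h1'⟩
      · rcases hwy.lt_or_gt with hw3 | hw3
        · -- z < w < y : quadruple (x, z, w, y), known e₂ = E x z y
          rcases crel_classify4 E hone htwo hthree x z w y h2 hw2 hw3 with
            ⟨_, h2', _, _⟩ | ⟨_, h2', _, _⟩ | ⟨_, h2', _, _⟩ | ⟨h1', _, _, _⟩ | ⟨h1', _, _, _⟩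
          · exact absurd he' h2'
          · exact absurd he' h2'
          · exact absurd he' h2'
          · exact Or.inl ⟨h2.trans hw2, (ep x z w h1').1⟩
          · exact Or.inl ⟨h2.trans hw2, (ep x z w h1').1⟩
        · -- y < w : quadruple (x, z, y, w), known e₁ = E x z y
          rcases crel_classify4 E hone htwo hthree x z y w h2 hyz' hw3 with
            ⟨h1', _, _, _⟩ | ⟨_, _, _, h4'⟩ | ⟨h1', _, _, _⟩ | ⟨_, h2', _, _⟩ | ⟨_, h2', _, _⟩
          · exact absurd he' h1'
          · exact Or.inr (Or.inr ⟨hw3, hyz'.trans hw3, fun h => h4' (ep w y z h).2.2.2.2⟩)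
          · exact absurd he' h1'
          · exact Or.inl ⟨h1.trans hw3, (ep x z w h2').1⟩
          · exact Or.inl ⟨h1.trans hw3, (ep x z w h2').1⟩

include hone htwo hthree hsymm in
lemma crel_keyC (x y z w : N)
    (hyz : y ≠ z) (hwx : w ≠ x) (hwy : w ≠ y) (hwz : w ≠ z)
    (h1 : y < x) (h2 : z < x) (hne : ¬ E x y z) :
    (w < x ∧ ¬ E x w z) ∨ (w < y ∧ w < z ∧ E w y z) ∨ (y < w ∧ z < w ∧ ¬ E w y z) := by
  have ep := crel_eperm E hsymm
  rcases hyz.lt_or_gt with hyz' | hyz'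
  · -- y < z < x
    have hne' : ¬ E y z x := fun h => hne (ep y z x h).2.2.2.1
    rcases hwy.lt_or_gt with hw | hw
    · -- w < y : quadruple (w, y, z, x), known ¬e₄
      rcases crel_classify4 E hone htwo hthree w y z x hw hyz' h2 with
        ⟨_, _, h3', _⟩ | ⟨h1', _, _, _⟩ | ⟨_, _, _, h4'⟩ | ⟨h1', _, _, _⟩ | ⟨_, _, _, h4'⟩
      · exact Or.inl ⟨hw.trans h1, fun h => h3' (ep x w z h).2.2.1⟩
      · exact Or.inr (Or.inl ⟨hw, hw.trans hyz', h1'⟩)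
      · exact absurd h4' hne'
      · exact Or.inr (Or.inl ⟨hw, hw.trans hyz', h1'⟩)
      · exact absurd h4' hne'
    · rcases hwz.lt_or_gt with hw2 | hw2
      · -- y < w < z : quadruple (y, w, z, x), known ¬e₃
        rcases crel_classify4 E hone htwo hthree y w z x hw hw2 h2 with
          ⟨_, _, _, h4'⟩ | ⟨_, _, _, h4'⟩ | ⟨_, _, h3', _⟩ | ⟨_, _, h3', _⟩ | ⟨_, _, h3', _⟩
        · exact Or.inl ⟨hw2.trans h2, fun h => h4' (ep x w z h).2.2.1⟩
        · exact Or.inl ⟨hw2.trans h2, fun h => h4' (ep x w z h).2.2.1⟩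
        · exact absurd h3' hne'
        · exact absurd h3' hne'
        · exact absurd h3' hne'
      · rcases hwx.lt_or_gt with hw3 | hw3
        · -- z < w < x : quadruple (y, z, w, x), known ¬e₂
          rcases crel_classify4 E hone htwo hthree y z w x hyz' hw2 hw3 with
            ⟨_, _, _, h4'⟩ | ⟨_, _, _, h4'⟩ | ⟨h1', _, _, _⟩ | ⟨_, h2', _, _⟩ | ⟨_, h2', _, _⟩
          · exact Or.inl ⟨hw3, fun h => h4' (ep x w z h).2.2.2.2⟩
          · exact Or.inl ⟨hw3, fun h => h4' (ep x w z h).2.2.2.2⟩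
          · exact Or.inr (Or.inr ⟨hyz'.trans hw2, hw2, fun h => h1' (ep w y z h).2.2.1⟩)
          · exact absurd h2' hne'
          · exact absurd h2' hne'
        · -- x < w : quadruple (y, z, x, w), known ¬e₁
          rcases crel_classify4 E hone htwo hthree y z x w hyz' h2 hw3 with
            ⟨_, h2', _, _⟩ | ⟨h1', _, _, _⟩ | ⟨_, h2', _, _⟩ | ⟨h1', _, _, _⟩ | ⟨h1', _, _, _⟩
          · exact Or.inr (Or.inr ⟨h1.trans hw3, h2.trans hw3, fun h => h2' (ep w y z h).2.2.1⟩)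
          · exact absurd h1' hne'
          · exact Or.inr (Or.inr ⟨h1.trans hw3, h2.trans hw3, fun h => h2' (ep w y z h).2.2.1⟩)
          · exact absurd h1' hne'
          · exact absurd h1' hne'
  · -- z < y < x
    have hne' : ¬ E z y x := fun h => hne (ep z y x h).2.2.2.2
    rcases hwz.lt_or_gt with hw | hw
    · -- w < z : quadruple (w, z, y, x), known ¬e₄
      rcases crel_classify4 E hone htwo hthree w z y x hw hyz' h1 with
        ⟨_, h2', _, _⟩ | ⟨h1', _, _, _⟩ | ⟨_, _, _, h4'⟩ | ⟨h1', _, _, _⟩ | ⟨_, _, _, h4'⟩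
      · exact Or.inl ⟨hw.trans h2, fun h => h2' (ep x w z h).2.2.1⟩
      · exact Or.inr (Or.inl ⟨hw.trans hyz', hw, (ep w z y h1').1⟩)
      · exact absurd h4' hne'
      · exact Or.inr (Or.inl ⟨hw.trans hyz', hw, (ep w z y h1').1⟩)
      · exact absurd h4' hne'
    · rcases hwy.lt_or_gt with hw2 | hw2
      · -- z < w < y : quadruple (z, w, y, x), known ¬e₃
        rcases crel_classify4 E hone htwo hthree z w y x hw hw2 h1 with
          ⟨_, h2', _, _⟩ | ⟨_, h2', _, _⟩ | ⟨_, _, h3', _⟩ | ⟨_, _, h3', _⟩ | ⟨_, _, h3', _⟩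
        · exact Or.inl ⟨hw2.trans h1, fun h => h2' (ep x w z h).2.2.2.2⟩
        · exact Or.inl ⟨hw2.trans h1, fun h => h2' (ep x w z h).2.2.2.2⟩
        · exact absurd h3' hne'
        · exact absurd h3' hne'
        · exact absurd h3' hne'
      · rcases hwx.lt_or_gt with hw3 | hw3
        · -- y < w < x : quadruple (z, y, w, x), known ¬e₂
          rcases crel_classify4 E hone htwo hthree z y w x hyz' hw2 hw3 with
            ⟨_, _, h3', _⟩ | ⟨_, _, h3', _⟩ | ⟨h1', _, _, _⟩ | ⟨_, h2', _, _⟩ | ⟨_, h2', _, _⟩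
          · exact Or.inl ⟨hw3, fun h => h3' (ep x w z h).2.2.2.2⟩
          · exact Or.inl ⟨hw3, fun h => h3' (ep x w z h).2.2.2.2⟩
          · exact Or.inr (Or.inr ⟨hw2, hyz'.trans hw2, fun h => h1' (ep w y z h).2.2.2.2⟩)
          · exact absurd h2' hne'
          · exact absurd h2' hne'
        · -- x < w : quadruple (z, y, x, w), known ¬e₁
          rcases crel_classify4 E hone htwo hthree z y x w hyz' h1 hw3 with
            ⟨_, h2', _, _⟩ | ⟨h1', _, _, _⟩ | ⟨_, h2', _, _⟩ | ⟨h1', _, _, _⟩ | ⟨h1', _, _, _⟩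
          · exact Or.inr (Or.inr ⟨h1.trans hw3, h2.trans hw3, fun h => h2' (ep w y z h).2.2.2.2⟩)
          · exact absurd h1' hne'
          · exact Or.inr (Or.inr ⟨h1.trans hw3, h2.trans hw3, fun h => h2' (ep w y z h).2.2.2.2⟩)
          · exact absurd h1' hne'
          · exact absurd h1' hne'

end CrelAux

/-- Let `(N,E)` be a ≤4-set-homogeneous 3-uniform hypergraph with
an `Aut(N,E)`-invariant dense total order, with at least one edge and one
non-edge, whose 4-sets with exactly 1 (resp. 2, 3) edges have the edges
positioned as prescribed.  Then the reconstructed relation `crel E` satisfies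
the C-relation axioms (C1)-(C4). -/
theorem stmt7 {N : Type*} [LinearOrder N] [DenselyOrdered N]
    (E : N → N → N → Prop) [inst : ∀ x y z : N, Decidable (E x y z)]
    (hsymm : ∀ x y z : N, E x y z → E x z y ∧ E y x z)
    (hirr : ∀ x y z : N, E x y z → x ≠ y ∧ x ≠ z ∧ y ≠ z)
    (hordinv : ∀ g : N ≃ N,
      (∀ x y z : N, E (g x) (g y) (g z) ↔ E x y z) → StrictMono g)
    (hsethom : ∀ U V : Finset N, U.card ≤ 4 →
      (∃ f : N → N, Set.BijOn f ↑U ↑V ∧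
        ∀ x ∈ U, ∀ y ∈ U, ∀ z ∈ U, (E x y z ↔ E (f x) (f y) (f z))) →
      ∃ g : N ≃ N, (∀ x y z : N, E (g x) (g y) (g z) ↔ E x y z) ∧
        U.image g = V)
    (hedge : ∃ x y z : N, E x y z)
    (hnonedge : ∃ x y z : N, x ≠ y ∧ x ≠ z ∧ y ≠ z ∧ ¬ E x y z)
    (hone : ∀ u₁ u₂ u₃ u₄ : N, u₁ < u₂ → u₂ < u₃ → u₃ < u₄ →
      ((if E u₁ u₂ u₃ then 1 else 0) + (if E u₁ u₂ u₄ then 1 else 0) +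
       (if E u₁ u₃ u₄ then 1 else 0) + (if E u₂ u₃ u₄ then 1 else 0) = 1) →
      E u₁ u₂ u₃)
    (htwo : ∀ u₁ u₂ u₃ u₄ : N, u₁ < u₂ → u₂ < u₃ → u₃ < u₄ →
      ((if E u₁ u₂ u₃ then 1 else 0) + (if E u₁ u₂ u₄ then 1 else 0) +
       (if E u₁ u₃ u₄ then 1 else 0) + (if E u₂ u₃ u₄ then 1 else 0) = 2) →
      E u₁ u₃ u₄ ∧ E u₂ u₃ u₄)
    (hthree : ∀ u₁ u₂ u₃ u₄ : N, u₁ < u₂ → u₂ < u₃ → u₃ < u₄ →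
      ((if E u₁ u₂ u₃ then 1 else 0) + (if E u₁ u₂ u₄ then 1 else 0) +
       (if E u₁ u₃ u₄ then 1 else 0) + (if E u₂ u₃ u₄ then 1 else 0) = 3) →
      ¬ E u₂ u₃ u₄) :
    (∀ x y z : N, crel E x y z → crel E x z y) ∧
    (∀ x y z : N, crel E x y z → ¬ crel E y x z) ∧
    (∀ x y z w : N, crel E x y z → crel E x w z ∨ crel E w y z) ∧
    (∀ x y : N, x ≠ y → crel E x y y) := by
  have ep := crel_eperm E hsymm
  refine ⟨?_, ?_, ?_, ?_⟩
  · -- (C1)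
    intro x y z h
    rcases h with ⟨hyz, hxy⟩ | ⟨hxy, hxz, hyz, hl1, hl2, he⟩ | ⟨hxy, hxz, hyz, hl1, hl2, hne⟩
    · subst hyz; exact Or.inl ⟨rfl, hxy⟩
    · exact Or.inr (Or.inl ⟨hxz, hxy, Ne.symm hyz, hl2, hl1, (ep x y z he).1⟩)
    · exact Or.inr (Or.inr ⟨hxz, hxy, Ne.symm hyz, hl2, hl1, fun h => hne (ep x z y h).1⟩)
  · -- (C2)
    intro x y z h hc
    rcases h with ⟨hyz, hxy⟩ | ⟨hxy, hxz, hyz, hl1, hl2, he⟩ | ⟨hxy, hxz, hyz, hl1, hl2, hne⟩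
    · subst hyz
      rcases hc with ⟨h1, _⟩ | ⟨_, b, _⟩ | ⟨_, b, _⟩
      · exact hxy h1
      · exact b rfl
      · exact b rfl
    · rcases hc with ⟨h1, _⟩ | ⟨_, _, _, d, _, _⟩ | ⟨_, _, _, _, _, f⟩
      · exact hxz h1
      · exact lt_asymm d hl1
      · exact f (ep x y z he).2.1
    · rcases hc with ⟨h1, _⟩ | ⟨_, _, _, _, _, f⟩ | ⟨_, _, _, d, _, _⟩
      · exact hxz h1
      · exact hne (ep y x z f).2.1
      · exact lt_asymm hl1 d
  · -- (C3)
    intro x y z w h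
    rcases h with ⟨hyz, hxy⟩ | ⟨hxy, hxz, hyz, hl1, hl2, he⟩ | ⟨hxy, hxz, hyz, hl1, hl2, hne⟩
    · subst hyz
      by_cases hwy : w = y
      · subst hwy; exact Or.inl (Or.inl ⟨rfl, hxy⟩)
      · exact Or.inr (Or.inl ⟨rfl, hwy⟩)
    · by_cases hwx : w = x
      · subst hwx; exact Or.inr (Or.inr (Or.inl ⟨hxy, hxz, hyz, hl1, hl2, he⟩))
      · by_cases hwy : w = y
        · subst hwy; exact Or.inl (Or.inr (Or.inl ⟨hxy, hxz, hyz, hl1, hl2, he⟩))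
        · by_cases hwz : w = z
          · subst hwz; exact Or.inl (Or.inl ⟨rfl, hxz⟩)
          · rcases crel_keyB E hone htwo hthree hsymm x y z w hyz hwx hwy hwz hl1 hl2 he with
              ⟨ha, hb⟩ | ⟨ha, hb, hc⟩ | ⟨ha, hb, hc⟩
            · exact Or.inl (Or.inr (Or.inl ⟨Ne.symm hwx, hxz, hwz, ha, hl2, hb⟩))
            · exact Or.inr (Or.inr (Or.inl ⟨hwy, hwz, hyz, ha, hb, hc⟩))
            · exact Or.inr (Or.inr (Or.inr ⟨hwy, hwz, hyz, ha, hb, hc⟩))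
    · by_cases hwx : w = x
      · subst hwx; exact Or.inr (Or.inr (Or.inr ⟨hxy, hxz, hyz, hl1, hl2, hne⟩))
      · by_cases hwy : w = y
        · subst hwy; exact Or.inl (Or.inr (Or.inr ⟨hxy, hxz, hyz, hl1, hl2, hne⟩))
        · by_cases hwz : w = z
          · subst hwz; exact Or.inl (Or.inl ⟨rfl, hxz⟩)
          · rcases crel_keyC E hone htwo hthree hsymm x y z w hyz hwx hwy hwz hl1 hl2 hne with
              ⟨ha, hb⟩ | ⟨ha, hb, hc⟩ | ⟨ha, hb, hc⟩
            · exact Or.inl (Or.inr (Or.inr ⟨Ne.symm hwx, hxz, hwz, ha, hl2, hb⟩))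
            · exact Or.inr (Or.inr (Or.inl ⟨hwy, hwz, hyz, ha, hb, hc⟩))
            · exact Or.inr (Or.inr (Or.inr ⟨hwy, hwz, hyz, ha, hb, hc⟩))
  · -- (C4)
    intro x y hxy
    exact Or.inl ⟨rfl, hxy⟩
end

section
/- Under the hypotheses of the previous statement (the C-relation constructed from the ordered ≤4-set-homogeneous 3-hypergraph (N,E,<)), C is 2-regular: for all distinct x,y,z ∈ N, at least one of C(x;y,z), C(y;x,z), C(z;x,y) holds. Moreover the order ≤ is compatible with C: for x < y < z, C(x;y,z) ∨ C(z;x,y) holds. -/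
/-- Let `(N,E)` be a ≤4-set-homogeneous 3-uniform hypergraph with
an `Aut(N,E)`-invariant dense total order, with at least one edge and one
non-edge, whose 4-sets with exactly 1 (resp. 2, 3) edges have the edges
positioned as prescribed.  Then the reconstructed relation
`crel E` is 2-regular (for distinct `x,y,z` one of `C(x;y,z)`, `C(y;x,z)`,
`C(z;x,y)` holds) and compatible with the order (`x<y<z` implies
`C(x;y,z) ∨ C(z;x,y)`). -/
theorem stmt8 {N : Type*} [LinearOrder N] [DenselyOrdered N]
    (E : N → N → N → Prop) [inst : ∀ x y z : N, Decidable (E x y z)]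
    (hsymm : ∀ x y z : N, E x y z → E x z y ∧ E y x z)
    (hirr : ∀ x y z : N, E x y z → x ≠ y ∧ x ≠ z ∧ y ≠ z)
    (hordinv : ∀ g : N ≃ N,
      (∀ x y z : N, E (g x) (g y) (g z) ↔ E x y z) → StrictMono g)
    (hsethom : ∀ U V : Finset N, U.card ≤ 4 →
      (∃ f : N → N, Set.BijOn f ↑U ↑V ∧
        ∀ x ∈ U, ∀ y ∈ U, ∀ z ∈ U, (E x y z ↔ E (f x) (f y) (f z))) →
      ∃ g : N ≃ N, (∀ x y z : N, E (g x) (g y) (g z) ↔ E x y z) ∧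
        U.image g = V)
    (hedge : ∃ x y z : N, E x y z)
    (hnonedge : ∃ x y z : N, x ≠ y ∧ x ≠ z ∧ y ≠ z ∧ ¬ E x y z)
    (hone : ∀ u₁ u₂ u₃ u₄ : N, u₁ < u₂ → u₂ < u₃ → u₃ < u₄ →
      ((if E u₁ u₂ u₃ then 1 else 0) + (if E u₁ u₂ u₄ then 1 else 0) +
       (if E u₁ u₃ u₄ then 1 else 0) + (if E u₂ u₃ u₄ then 1 else 0) = 1) →
      E u₁ u₂ u₃)
    (htwo : ∀ u₁ u₂ u₃ u₄ : N, u₁ < u₂ → u₂ < u₃ → u₃ < u₄ →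
      ((if E u₁ u₂ u₃ then 1 else 0) + (if E u₁ u₂ u₄ then 1 else 0) +
       (if E u₁ u₃ u₄ then 1 else 0) + (if E u₂ u₃ u₄ then 1 else 0) = 2) →
      E u₁ u₃ u₄ ∧ E u₂ u₃ u₄)
    (hthree : ∀ u₁ u₂ u₃ u₄ : N, u₁ < u₂ → u₂ < u₃ → u₃ < u₄ →
      ((if E u₁ u₂ u₃ then 1 else 0) + (if E u₁ u₂ u₄ then 1 else 0) +
       (if E u₁ u₃ u₄ then 1 else 0) + (if E u₂ u₃ u₄ then 1 else 0) = 3) →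
      ¬ E u₂ u₃ u₄) :
    (∀ x y z : N, x ≠ y → x ≠ z → y ≠ z →
      crel E x y z ∨ crel E y x z ∨ crel E z x y) ∧
    (∀ x y z : N, x < y → y < z → crel E x y z ∨ crel E z x y) := by
  have h1 : ∀ x y z : N, E x y z → E x z y := fun x y z h => (hsymm x y z h).1
  have h2 : ∀ x y z : N, E x y z → E y x z := fun x y z h => (hsymm x y z h).2
  have hswap : ∀ x y z : N, crel E x y z → crel E x z y := by
    rintro x y z (⟨h, hne⟩ | ⟨a, b, c, d, e, f⟩ | ⟨a, b, c, d, e, f⟩)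
    · exact Or.inl ⟨h.symm, h ▸ hne⟩
    · exact Or.inr (Or.inl ⟨b, a, c.symm, e, d, h1 _ _ _ f⟩)
    · exact Or.inr (Or.inr ⟨b, a, c.symm, e, d, fun hE => f (h1 _ _ _ hE)⟩)
  have key : ∀ x y z : N, x < y → y < z → crel E x y z ∨ crel E z x y := by
    intro x y z hxy hyz
    by_cases hE : E x y z
    · exact Or.inl (Or.inr (Or.inl ⟨hxy.ne, (hxy.trans hyz).ne, hyz.ne, hxy,
        hxy.trans hyz, hE⟩))
    · refine Or.inr (Or.inr (Or.inr ⟨(hxy.trans hyz).ne', hyz.ne', hxy.ne,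
        hxy.trans hyz, hyz, fun hE' => hE ?_⟩))
      exact h1 _ _ _ (h2 _ _ _ hE')
  refine ⟨?_, key⟩
  intro x y z hxy hxz hyz
  rcases lt_trichotomy x y with hxy' | rfl | hxy'
  · rcases lt_trichotomy y z with hyz' | rfl | hyz'
    · rcases key x y z hxy' hyz' with h | h
      · exact Or.inl h
      · exact Or.inr (Or.inr h)
    · exact absurd rfl hyz
    · rcases lt_trichotomy x z with hxz' | rfl | hxz'
      · rcases key x z y hxz' hyz' with h | h
        · exact Or.inl (hswap _ _ _ h)
        · exact Or.inr (Or.inl h)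
      · exact absurd rfl hxz
      · rcases key z x y hxz' hxy' with h | h
        · exact Or.inr (Or.inr h)
        · exact Or.inr (Or.inl (hswap _ _ _ h))
  · exact absurd rfl hxy
  · rcases lt_trichotomy x z with hxz' | rfl | hxz'
    · rcases key y x z hxy' hxz' with h | h
      · exact Or.inr (Or.inl h)
      · exact Or.inr (Or.inr (hswap _ _ _ h))
    · exact absurd rfl hxz
    · rcases lt_trichotomy y z with hyz' | rfl | hyz'
      · rcases key y z x hyz' hxz' with h | h
        · exact Or.inr (Or.inl (hswap _ _ _ h))
        · exact Or.inl h
      · exact absurd rfl hyz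
      · rcases key z y x hyz' hxy' with h | h
        · exact Or.inr (Or.inr (hswap _ _ _ h))
        · exact Or.inl (hswap _ _ _ h)
end

section
/- Let Z be a tournament that is a local order (every out-set x⁺ and in-set x⁻ is totally ordered by →) and define the ternary relation R on Z by R(x;y,z) iff (y→x ∧ y→z ∧ x→z) ∨ (z→x ∧ z→y ∧ x→y). Then R determines the tournament up to reversal in the following local sense: if g is a bijection of Z preserving R and fixing three points a,b,c with R(b;a,c) and b→a, then for all u ∉ {a,b,c}: b→u iff R(a;b,u) ∨ R(u;b,a), and for distinct u,u' outside {a,b,c} with b→u and b→u', u→u' iff R(u;b,u'). -/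
/-- The ternary relation `R(x;y,z)` of a tournament: `x` lies strictly between
`y` and `z` in one of the two induced linear configurations. -/
def Rrel {Z : Type*} (r : Z → Z → Prop) (x y z : Z) : Prop :=
  (r y x ∧ r y z ∧ r x z) ∨ (r z x ∧ r z y ∧ r x y)

/-- In a local order, the relation `R` determines the tournament
up to reversal, locally: if `g` is an `R`-preserving bijection fixing `a,b,c`
with `R(b;a,c)` and `b→a`, then for `u ∉ {a,b,c}`:
`b→u ↔ R(a;b,u) ∨ R(u;b,a)`, and for distinct `u,u' ∉ {a,b,c}` with `b→u`
and `b→u'`: `u→u' ↔ R(u;b,u')`. -/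
theorem stmt9 {Z : Type*} (r : Z → Z → Prop)
    (hirr : ∀ x, ¬ r x x)
    (htour : ∀ x y : Z, x ≠ y → (r x y ↔ ¬ r y x))
    (houtTrans : ∀ x u v w : Z, r x u → r x v → r x w →
      r u v → r v w → r u w)
    (hinTrans : ∀ x u v w : Z, r u x → r v x → r w x →
      r u v → r v w → r u w)
    (g : Z → Z) (hg : Function.Bijective g)
    (hgR : ∀ x y z : Z, Rrel r (g x) (g y) (g z) ↔ Rrel r x y z)
    (a b c : Z) (hab : a ≠ b) (hbc : b ≠ c) (hac : a ≠ c)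
    (hRbac : Rrel r b a c) (hba : r b a)
    (hga : g a = a) (hgb : g b = b) (hgc : g c = c) :
    ∀ u : Z, u ≠ a → u ≠ b → u ≠ c →
      (r b u ↔ (Rrel r a b u ∨ Rrel r u b a)) ∧
      (∀ u' : Z, u' ≠ a → u' ≠ b → u' ≠ c → u ≠ u' →
        r b u → r b u' → (r u u' ↔ Rrel r u b u')) := by
  have hnab : ¬ r a b := (htour b a (Ne.symm hab)).mp hba
  intro u hua hub huc
  constructor
  · constructor
    · intro hbu
      by_cases hau : r a u
      · exact Or.inl (Or.inl ⟨hba, hbu, hau⟩)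
      · have hua' : r u a := (htour u a hua).mpr hau
        exact Or.inr (Or.inl ⟨hbu, hba, hua'⟩)
    · rintro ((⟨_, h2, _⟩ | ⟨_, _, h3⟩) | (⟨h1, _, _⟩ | ⟨_, h2, _⟩))
      · exact h2
      · exact absurd h3 hnab
      · exact h1
      · exact absurd h2 hnab
  · intro u' _ hub' _ hne hbu hbu'
    constructor
    · intro h
      exact Or.inl ⟨hbu, hbu', h⟩
    · rintro (⟨_, _, h⟩ | ⟨_, _, h⟩)
      · exact h
      · exact absurd h ((htour b u (Ne.symm hub)).mp hbu)
end

section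
/- Let (Z,→) be the dense local order realized as a countable dense set of points on the unit circle with no two antipodal, with x→y iff the clockwise distance from x to y is less than π. Define the 3-hypergraph edge relation E: a 3-set is an edge iff it satisfies R under some ordering (equivalently, lies in an open half-circle). Then for any finite U ⊆ Z, the relation ∼_U on U defined by a ∼_U b iff a = b or for all x ∈ U∖{a,b}, {a,b,x} is an edge, is an equivalence relation on U. -/
/-- The dense local order on the circle: `x → y` iff the clockwise distance
from `x` to `y` is less than `π`. -/
def circTo (x y : AddCircle (2 * Real.pi)) : Prop :=
  ∃ t : ℝ, 0 < t ∧ t < Real.pi ∧ y = x + (t : AddCircle (2 * Real.pi))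

/-- `R(x;y,z)` for the circular tournament. -/
def circR (x y z : AddCircle (2 * Real.pi)) : Prop :=
  (circTo y x ∧ circTo y z ∧ circTo x z) ∨ (circTo z x ∧ circTo z y ∧ circTo x y)

/-- A 3-set is an edge iff some ordering of it satisfies `R` (equivalently it
lies in an open semicircle). -/
def circEdge (x y z : AddCircle (2 * Real.pi)) : Prop :=
  circR x y z ∨ circR y x z ∨ circR z x y

open Real

local notation "P" => (2 * Real.pi)

lemma two_pi_pos' : (0:ℝ) < P := by positivity

lemma coe_inj' {r : ℝ} (h1 : -(2*π) < r) (h2 : r < 2*π) (h : (r : AddCircle P) = 0) : r = 0 := by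
  obtain ⟨n, hn⟩ := (AddCircle.coe_eq_zero_iff (2*π)).mp h
  rw [zsmul_eq_mul] at hn
  have hπ : (0:ℝ) < π := pi_pos
  rcases lt_trichotomy n 0 with hn0 | hn0 | hn0
  · have h3 : (n:ℝ) ≤ -1 := by
      have : n ≤ -1 := by omega
      exact_mod_cast this
    nlinarith
  · rw [hn0] at hn; push_cast at hn; linarith
  · have h3 : (1:ℝ) ≤ (n:ℝ) := by
      have : 1 ≤ n := by omega
      exact_mod_cast this
    nlinarith

lemma rep' (x z : AddCircle P) : ∃ r : ℝ, 0 ≤ r ∧ r < 2*π ∧ z = x + (r : AddCircle P) := by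
  obtain ⟨r0, hr0⟩ := Quotient.exists_rep (z - x)
  have hr0' : ((r0 : ℝ) : AddCircle P) = z - x := hr0
  set r := toIcoMod two_pi_pos' 0 r0 with hrdef
  have hmem := toIcoMod_mem_Ico two_pi_pos' 0 r0
  rw [Set.mem_Ico, zero_add] at hmem
  refine ⟨r, hmem.1, hmem.2, ?_⟩
  have hsub : r0 - r = toIcoDiv two_pi_pos' 0 r0 • (2*π) := self_sub_toIcoMod two_pi_pos' 0 r0
  have h0 : ((r0 - r : ℝ) : AddCircle P) = 0 := (AddCircle.coe_eq_zero_iff _).mpr ⟨_, hsub.symm⟩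
  rw [AddCircle.coe_sub] at h0
  rw [(sub_eq_zero.mp h0).symm, hr0']; abel

lemma to_asymm {x y : AddCircle P} (h1 : circTo x y) (h2 : circTo y x) : False := by
  obtain ⟨t, ht1, ht2, hty⟩ := h1
  obtain ⟨s, hs1, hs2, hsx⟩ := h2
  have hx : x = x + ((t + s : ℝ) : AddCircle P) := by
    rw [AddCircle.coe_add]
    calc x = y + (s:AddCircle P) := hsx
    _ = x + (t:AddCircle P) + (s:AddCircle P) := by rw [hty]
    _ = x + ((t:AddCircle P) + (s:AddCircle P)) := by abel
  have h0 : ((t + s : ℝ) : AddCircle P) = 0 := by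
    have := hx.symm
    rwa [add_eq_left] at this
  have hπ : (0:ℝ) < π := pi_pos
  have := coe_inj' (by linarith) (by linarith) h0
  linarith

lemma trichotomy' {x z : AddCircle P} (hne : z ≠ x)
    (hanti : z ≠ x + ((π:ℝ) : AddCircle P)) : circTo x z ∨ circTo z x := by
  obtain ⟨r, hr0, hr2, hz⟩ := rep' x z
  have hπ : (0:ℝ) < π := pi_pos
  have hrne0 : r ≠ 0 := by
    intro h; apply hne; rw [hz, h]; norm_cast; simp
  have hrneπ : r ≠ π := by
    intro h; apply hanti; rw [hz, h]
  rcases lt_trichotomy r π with h | h | h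
  · exact Or.inl ⟨r, lt_of_le_of_ne hr0 (Ne.symm hrne0), h, hz⟩
  · exact absurd h hrneπ
  · refine Or.inr ⟨2*π - r, by linarith, by linarith, ?_⟩
    rw [hz, add_assoc, ← AddCircle.coe_add]
    have : r + (2*π - r) = 2*π := by ring
    rw [this]
    simp [AddCircle.coe_period]

lemma trans_edge {x y z : AddCircle P} (h1 : circTo x y) (h2 : circTo y z)
    (h3 : circTo x z) : circEdge x y z :=
  Or.inr (Or.inl (Or.inl ⟨h1, h3, h2⟩))

lemma edge_comm₁ {x y z : AddCircle P} (h : circEdge x y z) : circEdge y x z := by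
  unfold circEdge circR at h ⊢; tauto

lemma edge_comm₂ {x y z : AddCircle P} (h : circEdge x y z) : circEdge x z y := by
  unfold circEdge circR at h ⊢; tauto

lemma not_cyc {a b c : AddCircle P} (h1 : circTo a b) (h2 : circTo b c)
    (h3 : circTo c a) : ¬ circEdge a b c := by
  intro h
  have f1 : ¬ circTo b a := fun h' => to_asymm h1 h'
  have f2 : ¬ circTo c b := fun h' => to_asymm h2 h'
  have f3 : ¬ circTo a c := fun h' => to_asymm h3 h'
  unfold circEdge circR at h; tauto

lemma to_step (b : AddCircle P) {s t : ℝ} (h1 : s < t) (h2 : t - s < π) :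
    circTo (b + (s : AddCircle P)) (b + (t : AddCircle P)) :=
  ⟨t - s, by linarith, h2, by rw [add_assoc, ← AddCircle.coe_add]; ring_nf⟩

lemma semi (b : AddCircle P) {s t u : ℝ} (hs1 : 0 < s) (hs2 : s < π)
    (ht1 : 0 < t) (ht2 : t < π) (hu1 : 0 < u) (hu2 : u < π)
    (hst : s ≠ t) (hsu : s ≠ u) (htu : t ≠ u) :
    circEdge (b + (s : AddCircle P)) (b + (t : AddCircle P)) (b + (u : AddCircle P)) := by
  have step : ∀ p q : ℝ, p < q → q - p < π →
      circTo (b + (p : AddCircle P)) (b + (q : AddCircle P)) := fun p q h1 h2 => to_step b h1 h2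
  rcases lt_or_gt_of_ne hst with h1 | h1 <;> rcases lt_or_gt_of_ne hsu with h2 | h2 <;>
    rcases lt_or_gt_of_ne htu with h3 | h3
  · exact trans_edge (step _ _ h1 (by linarith)) (step _ _ h3 (by linarith)) (step _ _ h2 (by linarith))
  · exact edge_comm₂ (trans_edge (step _ _ h2 (by linarith)) (step _ _ h3 (by linarith)) (step _ _ h1 (by linarith)))
  · exact absurd h3 (by intro _; linarith)
  · exact edge_comm₂ (edge_comm₁ (trans_edge (step _ _ h2 (by linarith)) (step _ _ h1 (by linarith)) (step _ _ h3 (by linarith))))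
  · exact edge_comm₁ (trans_edge (step _ _ h1 (by linarith)) (step _ _ h2 (by linarith)) (step _ _ h3 (by linarith)))
  · exact absurd h3 (by intro _; linarith)
  · exact edge_comm₁ (edge_comm₂ (trans_edge (step _ _ h3 (by linarith)) (step _ _ h2 (by linarith)) (step _ _ h1 (by linarith))))
  · exact edge_comm₁ (edge_comm₂ (edge_comm₁ (trans_edge (step _ _ h3 (by linarith)) (step _ _ h1 (by linarith)) (step _ _ h2 (by linarith)))))

lemma out_edge {b a c x : AddCircle P} (h1 : circTo b a) (h2 : circTo b c)
    (h3 : circTo b x) (hac : a ≠ c) (hax : a ≠ x) (hcx : c ≠ x) :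
    circEdge a c x := by
  obtain ⟨s, hs1, hs2, ha⟩ := h1
  obtain ⟨t, ht1, ht2, hc⟩ := h2
  obtain ⟨u, hu1, hu2, hx⟩ := h3
  rw [ha, hc, hx]
  exact semi b hs1 hs2 ht1 ht2 hu1 hu2
    (fun e => hac (by rw [ha, hc, e])) (fun e => hax (by rw [ha, hx, e]))
    (fun e => hcx (by rw [hc, hx, e]))

lemma in_edge {b a c x : AddCircle P} (h1 : circTo a b) (h2 : circTo c b)
    (h3 : circTo x b) (hac : a ≠ c) (hax : a ≠ x) (hcx : c ≠ x) :
    circEdge a c x := by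
  obtain ⟨s, hs1, hs2, hb1⟩ := h1
  obtain ⟨t, ht1, ht2, hb2⟩ := h2
  obtain ⟨u, hu1, hu2, hb3⟩ := h3
  have hπ : (0:ℝ) < π := pi_pos
  have key : ∀ (y : AddCircle P) (r : ℝ), b = y + (r : AddCircle P) →
      y = (b + ((-π : ℝ) : AddCircle P)) + ((π - r : ℝ) : AddCircle P) := by
    intro y r h
    rw [h, add_assoc, add_assoc, ← AddCircle.coe_add, ← AddCircle.coe_add]
    have : r + (-π + (π - r)) = 0 := by ring
    rw [this]
    simp
  have ha := key a s hb1
  have hc := key c t hb2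
  have hx := key x u hb3
  rw [ha, hc, hx]
  refine semi _ (by linarith) (by linarith) (by linarith) (by linarith)
    (by linarith) (by linarith) ?_ ?_ ?_
  · intro e; exact hac (by rw [ha, hc, e])
  · intro e; exact hax (by rw [ha, hx, e])
  · intro e; exact hcx (by rw [hc, hx, e])

lemma cyc_of_not_edge {a b c : AddCircle P}
    (t1 : circTo a b ∨ circTo b a) (t2 : circTo b c ∨ circTo c b)
    (t3 : circTo c a ∨ circTo a c) (h : ¬ circEdge a b c) :
    (circTo a b ∧ circTo b c ∧ circTo c a) ∨ (circTo b a ∧ circTo c b ∧ circTo a c) := by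
  rcases t1 with hab | hba
  · rcases t2 with hbc | hcb
    · rcases t3 with hca | hac
      · exact Or.inl ⟨hab, hbc, hca⟩
      · exact absurd (trans_edge hab hbc hac) h
    · rcases t3 with hca | hac
      · exact absurd (edge_comm₂ (edge_comm₁ (trans_edge hca hab hcb))) h
      · exact absurd (edge_comm₂ (trans_edge hac hcb hab)) h
  · rcases t2 with hbc | hcb
    · rcases t3 with hca | hac
      · exact absurd (edge_comm₁ (edge_comm₂ (trans_edge hbc hca hba))) h
      · exact absurd (edge_comm₁ (trans_edge hba hac hbc)) h
    · rcases t3 with hca | hac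
      · exact absurd (edge_comm₁ (edge_comm₂ (edge_comm₁ (trans_edge hcb hba hca)))) h
      · exact Or.inr ⟨hba, hcb, hac⟩

lemma key_lemma {a b c x : AddCircle P}
    (Eabc : circEdge a b c) (Eabx : circEdge a b x) (Ebcx : circEdge b c x)
    (c1 : circTo a c) (c2 : circTo c x) (c3 : circTo x a)
    (tab : circTo a b ∨ circTo b a) (tbc : circTo b c ∨ circTo c b)
    (tbx : circTo b x ∨ circTo x b)
    (hac : a ≠ c) (hax : a ≠ x) (hcx : c ≠ x) : circEdge a c x := by
  have Ecxb : circEdge c x b := edge_comm₂ (edge_comm₁ Ebcx)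
  rcases tab with hab | hba
  · have Exab : circEdge x a b := edge_comm₂ (edge_comm₁ (edge_comm₂ (edge_comm₁ Eabx)))
    have hxb : circTo x b := tbx.resolve_left (fun hbx => not_cyc c3 hab hbx Exab)
    have hcb : circTo c b := tbc.resolve_left (fun hbc => not_cyc c2 hxb hbc Ecxb)
    exact in_edge hab hcb hxb hac hax hcx
  · have Eacb : circEdge a c b := edge_comm₂ Eabc
    have hbc : circTo b c := tbc.resolve_right (fun hcb => not_cyc c1 hcb hba Eacb)
    have hbx : circTo b x := tbx.resolve_right (fun hxb => not_cyc c2 hxb hbc Ecxb)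
    exact out_edge hba hbc hbx hac hax hcx



/-- For the dense local order on the circle (countable dense
set of points, no two antipodal) and the derived 3-hypergraph `E`, for any
finite `U ⊆ Z` the relation `a ∼_U b` (`a = b` or all triples `{a,b,x}`,
`x ∈ U∖{a,b}`, are edges) is an equivalence relation on `U`. -/
theorem stmt10 (Z : Set (AddCircle (2 * Real.pi)))
    (hZcount : Z.Countable) (hZdense : Dense Z)
    (hanti : ∀ x ∈ Z, ∀ y ∈ Z,
      y ≠ x + ((Real.pi : ℝ) : AddCircle (2 * Real.pi)))
    (U : Finset (AddCircle (2 * Real.pi))) (hUZ : ↑U ⊆ Z) :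
    (∀ a ∈ U, a = a ∨ ∀ x ∈ U, x ≠ a → x ≠ a → circEdge a a x) ∧
    (∀ a ∈ U, ∀ b ∈ U,
      (a = b ∨ ∀ x ∈ U, x ≠ a → x ≠ b → circEdge a b x) →
      (b = a ∨ ∀ x ∈ U, x ≠ b → x ≠ a → circEdge b a x)) ∧
    (∀ a ∈ U, ∀ b ∈ U, ∀ c ∈ U,
      (a = b ∨ ∀ x ∈ U, x ≠ a → x ≠ b → circEdge a b x) →
      (b = c ∨ ∀ x ∈ U, x ≠ b → x ≠ c → circEdge b c x) →
      (a = c ∨ ∀ x ∈ U, x ≠ a → x ≠ c → circEdge a c x)) := by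
  refine ⟨fun a _ => Or.inl rfl, ?_, ?_⟩
  · intro a _ b _ h
    rcases h with h | h
    · exact Or.inl h.symm
    · exact Or.inr (fun x hx hxb hxa => edge_comm₁ (h x hx hxa hxb))
  · intro a ha b hb c hc hab hbc
    by_cases hac : a = c
    · exact Or.inl hac
    rcases hab with rfl | Hab
    · exact hbc
    rcases hbc with rfl | Hbc
    · exact Or.inr Hab
    by_cases hab2 : a = b
    · subst hab2; exact Or.inr Hbc
    by_cases hbc2 : b = c
    · subst hbc2; exact Or.inr Hab
    right
    intro x hxU hxa hxc
    have haZ : a ∈ Z := hUZ ha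
    have hbZ : b ∈ Z := hUZ hb
    have hcZ : c ∈ Z := hUZ hc
    have hxZ : x ∈ Z := hUZ hxU
    have tac : circTo a c ∨ circTo c a :=
      trichotomy' (Ne.symm hac) (hanti a haZ c hcZ)
    have tab : circTo a b ∨ circTo b a :=
      trichotomy' (Ne.symm hab2) (hanti a haZ b hbZ)
    have tbc : circTo b c ∨ circTo c b :=
      trichotomy' (Ne.symm hbc2) (hanti b hbZ c hcZ)
    by_cases hxb : x = b
    · subst hxb
      exact edge_comm₂ (Hab c hc (Ne.symm hac) (Ne.symm hbc2))
    have Eabc : circEdge a b c := Hab c hc (Ne.symm hac) (Ne.symm hbc2)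
    have Eabx : circEdge a b x := Hab x hxU hxa hxb
    have Ebcx : circEdge b c x := Hbc x hxU hxb hxc
    have tcx : circTo c x ∨ circTo x c :=
      trichotomy' hxc (hanti c hcZ x hxZ)
    have txa : circTo x a ∨ circTo a x :=
      trichotomy' (Ne.symm hxa) (hanti x hxZ a haZ)
    have tbx : circTo b x ∨ circTo x b :=
      trichotomy' hxb (hanti b hbZ x hxZ)
    by_cases hE : circEdge a c x
    · exact hE
    rcases cyc_of_not_edge tac tcx txa hE with ⟨d1, d2, d3⟩ | ⟨d1, d2, d3⟩
    · exact key_lemma Eabc Eabx Ebcx d1 d2 d3 tab tbc tbx hac (Ne.symm hxa) (Ne.symm hxc)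
    · exact edge_comm₂ (key_lemma Eabx Eabc (edge_comm₂ Ebcx) d3 d2 d1 tab tbx tbc
        (Ne.symm hxa) hac hxc)
end

section
/- Let U be a finite 'balanced' subset of the dense local order 3-hypergraph (Z,E), i.e. for all distinct a,b ∈ U there exists x ∈ U∖{a,b} with {a,b,x} a non-edge. Then |U| is odd: if z ∈ U and z⁺ ∩ U has r elements, then |U| = 2r+1. -/
open scoped Classical

/-!
Measure positions clockwise from `z` in `[0, 2π)`; let `A` be the positions of `U` and `B` those
of the antipodal set `U + π`. They are disjoint, as `U` has no antipodal pairs, and between any two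
points `u₁ + π < u₂ + π` of `B` lies a point of `A`: if they are less than `π` apart then `u₁ → u₂`,
and the third vertex `c` of a cyclic triangle `u₁ → u₂ → c → u₁`, which exists by balance, lies
between them; otherwise `u₂` does. As `|A| = |B|` and `0 ∈ A`, the two sets interleave, so below
`π ∈ B` there is exactly one more point of `A` than of `B`. Those points of `A` are `z` and its
out-neighbours, those of `B` the antipodes of its in-neighbours, and `U ∖ {z}` is split between
the two, whence `|U| = 2r + 1`.
-/

open Real Finset

local notation "𝕋" => AddCircle (2 * π)

instance fact_zero_lt_two_pi : Fact (0 < 2 * π) := ⟨two_pi_pos⟩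

noncomputable def circPos (u : 𝕋) : ℝ := AddCircle.equivIco (2 * π) 0 u

lemma circPos_nonneg (u : 𝕋) : 0 ≤ circPos u := (AddCircle.equivIco (2 * π) 0 u).2.1

lemma circPos_lt_two_pi (u : 𝕋) : circPos u < 2 * π :=
  (zero_add (2 * π)) ▸ (AddCircle.equivIco (2 * π) 0 u).2.2

@[simp] lemma coe_circPos (u : 𝕋) : (circPos u : 𝕋) = u := AddCircle.coe_equivIco

lemma circPos_eq_iff {u : 𝕋} {t : ℝ} (h₀ : 0 ≤ t) (h₁ : t < 2 * π) :
    circPos u = t ↔ u = t := by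
  constructor
  · rintro rfl; exact (coe_circPos u).symm
  · rintro rfl; exact AddCircle.equivIco_coe_of_mem ⟨h₀, by rwa [zero_add]⟩

lemma circPos_injective : Function.Injective circPos := fun u v h => by
  rw [← coe_circPos u, h, coe_circPos]

lemma circPos_zero : circPos 0 = 0 := (circPos_eq_iff le_rfl two_pi_pos).2 (by simp)

lemma coe_pi_add_coe_pi : (π : 𝕋) + π = 0 := by
  rw [← AddCircle.coe_add, ← two_mul, AddCircle.coe_period]

lemma circTo_add_right {x y : 𝕋} (c : 𝕋) : circTo (x + c) (y + c) ↔ circTo x y := by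
  simp only [circTo, add_right_comm x c, add_left_inj]

lemma circTo_coe_iff {s t : ℝ} (hs₀ : 0 ≤ s) (hs : s < 2 * π) (ht₀ : 0 ≤ t) (ht : t < 2 * π) :
    circTo (s : 𝕋) t ↔ (s < t ∧ t < s + π) ∨ t + π < s := by
  have mem : ∀ {r : ℝ}, 0 ≤ r → r < 2 * π → r ∈ Set.Ico 0 (0 + 2 * π) := fun h₀ h₁ =>
    ⟨h₀, by rwa [zero_add]⟩
  constructor
  · rintro ⟨d, hd₀, hd, h⟩
    rw [← AddCircle.coe_add] at h
    by_cases hsd : s + d < 2 * π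
    · have := (AddCircle.coe_eq_coe_iff_of_mem_Ico (mem ht₀ ht) (mem (by linarith) hsd)).1 h
      left; constructor <;> linarith
    · rw [← sub_add_cancel (s + d) (2 * π), AddCircle.coe_add, AddCircle.coe_period, add_zero,
        AddCircle.coe_eq_coe_iff_of_mem_Ico (mem ht₀ ht) (mem (by linarith) (by linarith))] at h
      right; linarith
  · rintro (⟨hst, hts⟩ | hts)
    · exact ⟨t - s, by linarith, by linarith, by rw [AddCircle.coe_sub]; abel⟩
    · refine ⟨t + 2 * π - s, by linarith, by linarith, ?_⟩
      rw [AddCircle.coe_sub, AddCircle.coe_add, AddCircle.coe_period]; abel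

lemma circPos_eq_zero_iff {u : 𝕋} : circPos u = 0 ↔ u = 0 := by
  rw [circPos_eq_iff le_rfl two_pi_pos, AddCircle.coe_zero]

lemma circTo_sub_right {x y : 𝕋} (c : 𝕋) : circTo (x - c) (y - c) ↔ circTo x y := by
  simp only [sub_eq_add_neg, circTo_add_right]

lemma circTo_iff_circPos (z : 𝕋) {x y : 𝕋} :
    circTo x y ↔ (circPos (x - z) < circPos (y - z) ∧ circPos (y - z) < circPos (x - z) + π) ∨
      circPos (y - z) + π < circPos (x - z) := by
  have := circTo_coe_iff (circPos_nonneg (x - z)) (circPos_lt_two_pi _) (circPos_nonneg (y - z))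
    (circPos_lt_two_pi _)
  rwa [coe_circPos, coe_circPos, circTo_sub_right] at this

lemma circTo_irrefl (x : 𝕋) : ¬ circTo x x := by
  rw [circTo_iff_circPos x]
  rintro (⟨h, -⟩ | h) <;> linarith [pi_pos]

lemma circTo_asymm {x y : 𝕋} (h : circTo x y) : ¬ circTo y x := by
  rw [circTo_iff_circPos x, sub_self, circPos_zero] at h ⊢
  have := circPos_nonneg (y - x)
  rcases h with ⟨h₁, h₂⟩ | h <;> rintro (⟨h₃, h₄⟩ | h') <;> linarith [pi_pos]

lemma circTo_or_circTo_of_ne {x y : 𝕋} (hxy : x ≠ y) (hy : y ≠ x + π) :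
    circTo x y ∨ circTo y x := by
  have h₀ : circPos (y - x) ≠ 0 := by
    rw [Ne, circPos_eq_zero_iff, sub_eq_zero]; exact hxy.symm
  have hπ : circPos (y - x) ≠ π := by
    rw [Ne, circPos_eq_iff pi_pos.le (by linarith [pi_pos]), sub_eq_iff_eq_add']; exact hy
  have := (circPos_nonneg (y - x)).lt_of_ne' h₀
  rw [circTo_iff_circPos x, circTo_iff_circPos x, sub_self, circPos_zero]
  rcases hπ.lt_or_gt with h | h
  · left; left; constructor <;> linarith
  · right; right; linarith

lemma circTo_iff_circTo_add_pi {x y : 𝕋} : circTo x y ↔ circTo y (x + π) := by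
  constructor
  · rintro ⟨d, hd₀, hd, rfl⟩
    exact ⟨π - d, by linarith, by linarith, by rw [AddCircle.coe_sub]; abel⟩
  · rintro ⟨e, he₀, he, h⟩
    refine ⟨π - e, by linarith, by linarith, ?_⟩
    rw [AddCircle.coe_sub, eq_sub_of_add_eq h.symm]; abel

lemma circTo_iff_add_pi_circTo {x y : 𝕋} : circTo x y ↔ circTo (y + π) x := by
  rw [circTo_iff_circTo_add_pi (x := y + π), add_assoc, coe_pi_add_coe_pi, add_zero]

lemma circPos_sub_lt_pi_iff {u z : 𝕋} : circPos (u - z) < π ↔ u = z ∨ circTo z u := by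
  rw [circTo_iff_circPos z, sub_self, circPos_zero, ← sub_eq_zero, ← circPos_eq_zero_iff]
  have := circPos_nonneg (u - z)
  constructor
  · intro h
    rcases this.eq_or_lt with h₀ | h₀
    · exact Or.inl h₀.symm
    · exact Or.inr (Or.inl ⟨h₀, by linarith⟩)
  · rintro (h | ⟨-, h⟩ | h) <;> linarith [pi_pos]

lemma circPos_sub_mem_Ioo_of_circTo {x y w : 𝕋} (z : 𝕋) (hxy : circTo x y) (hyw : circTo y w)
    (hxw : circPos (x - z) < circPos (w - z)) :
    circPos (x - z) < circPos (y - z) ∧ circPos (y - z) < circPos (w - z) := by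
  rw [circTo_iff_circPos z] at hxy hyw
  have := circPos_nonneg (w - z)
  have := circPos_lt_two_pi (x - z)
  rcases hxy with ⟨h₁, h₁'⟩ | h₁ <;> rcases hyw with ⟨h₂, h₂'⟩ | h₂
  · exact ⟨h₁, h₂⟩
  all_goals linarith

lemma circTo_of_not_circEdge {a b c : 𝕋} (hab : circTo a b) (hca : c ≠ a) (hcb : c ≠ b)
    (hca' : c ≠ a + π) (hcb' : c ≠ b + π) (hE : ¬ circEdge a b c) :
    circTo b c ∧ circTo c a := by
  have hac := circTo_or_circTo_of_ne hca.symm hca'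
  have hbc := circTo_or_circTo_of_ne hcb.symm hcb'
  unfold circEdge circR at hE
  tauto

theorem Finset.exists_strictMonoOn_pred_of_separates {α : Type*} [LinearOrder α]
    {A B : Finset α} (hbelow : ∀ b ∈ B, ∃ a ∈ A, a < b)
    (hsep : ∀ b₁ ∈ B, ∀ b₂ ∈ B, b₁ < b₂ → ∃ a ∈ A, b₁ < a ∧ a < b₂) :
    ∃ pred : α → α, StrictMonoOn pred B ∧
      ∀ b ∈ B, pred b ∈ A ∧ pred b < b ∧ ∀ a ∈ A, a < b → a ≤ pred b := by
  let pred : α → α := fun b =>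
    if h : (A.filter (· < b)).Nonempty then (A.filter (· < b)).max' h else b
  have hpred : ∀ b ∈ B, pred b ∈ A ∧ pred b < b ∧ ∀ a ∈ A, a < b → a ≤ pred b := by
    intro b hb
    obtain ⟨a, ha, hab⟩ := hbelow b hb
    have hne : (A.filter (· < b)).Nonempty := ⟨a, mem_filter.2 ⟨ha, hab⟩⟩
    have hmem := mem_filter.1 ((A.filter (· < b)).max'_mem hne)
    simp only [pred, dif_pos hne]
    exact ⟨hmem.1, hmem.2, fun a ha hab => le_max' _ _ (mem_filter.2 ⟨ha, hab⟩)⟩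
  refine ⟨pred, fun b₁ hb₁ b₂ hb₂ h => ?_, hpred⟩
  obtain ⟨a, ha, h₁, h₂⟩ := hsep b₁ hb₁ b₂ hb₂ h
  exact ((hpred b₁ hb₁).2.1.trans h₁).trans_le ((hpred b₂ hb₂).2.2 a ha h₂)

theorem Finset.card_filter_lt_eq_add_one_of_separates {α : Type*} [LinearOrder α]
    {A B : Finset α} (hAB : Disjoint A B) (hcard : #A = #B) (hbelow : ∀ b ∈ B, ∃ a ∈ A, a < b)
    (hsep : ∀ b₁ ∈ B, ∀ b₂ ∈ B, b₁ < b₂ → ∃ a ∈ A, b₁ < a ∧ a < b₂) {x : α} (hx : x ∈ B) :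
    #(A.filter (· < x)) = #(B.filter (· < x)) + 1 := by
  obtain ⟨pred, hmono, hpred⟩ := exists_strictMonoOn_pred_of_separates hbelow hsep
  have hinj : ∀ s ⊆ B, Set.InjOn pred s := fun s hs => hmono.injOn.mono (coe_subset.2 hs)
  -- `pred` injects each side of `x` in `B` into the same side in `A`; as `#A = #B`, both are onto.
  have hle : #(B.filter (· ≤ x)) ≤ #(A.filter (· < x)) := by
    refine card_le_card_of_injOn pred (fun b hb => ?_) (hinj _ (filter_subset _ _))
    obtain ⟨hb, hbx⟩ := mem_filter.1 hb
    exact mem_filter.2 ⟨(hpred b hb).1, (hpred b hb).2.1.trans_le hbx⟩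
  have hgt : #(B.filter (x < ·)) ≤ #(A.filter (x < ·)) := by
    refine card_le_card_of_injOn pred (fun b hb => ?_) (hinj _ (filter_subset _ _))
    obtain ⟨hb, hxb⟩ := mem_filter.1 hb
    obtain ⟨a, ha, hxa, hab⟩ := hsep x hx b hb hxb
    exact mem_filter.2 ⟨(hpred b hb).1, hxa.trans_le ((hpred b hb).2.2 a ha hab)⟩
  have hA : #(A.filter (· < x)) + #(A.filter (x < ·)) = #A := by
    rw [← card_filter_add_card_filter_not (s := A) (p := (· < x))]
    congr 2
    refine filter_congr fun a ha => ?_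
    rw [not_lt, le_iff_lt_or_eq, or_iff_left]
    rintro rfl
    exact disjoint_left.1 hAB ha hx
  have hB : #(B.filter (· ≤ x)) + #(B.filter (x < ·)) = #B := by
    rw [← card_filter_add_card_filter_not (s := B) (p := (· ≤ x))]
    simp only [not_le]
  have hBx : #(B.filter (· ≤ x)) = #(B.filter (· < x)) + 1 := by
    rw [← card_insert_of_notMem (s := B.filter (· < x)) (a := x) (by simp)]
    congr 1
    ext b
    simp only [mem_filter, mem_insert, le_iff_lt_or_eq]
    constructor
    · rintro ⟨hb, h | rfl⟩
      exacts [Or.inr ⟨hb, h⟩, Or.inl rfl]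
    · rintro (rfl | ⟨hb, h⟩)
      exacts [⟨hx, Or.inr rfl⟩, ⟨hb, Or.inl h⟩]
  omega

lemma exists_circPos_sub_mem_Ioo_of_balanced {U : Finset 𝕋} (hU : ∀ x ∈ U, ∀ y ∈ U, y ≠ x + π)
    (hbal : ∀ a ∈ U, ∀ b ∈ U, a ≠ b → ∃ x ∈ U, x ≠ a ∧ x ≠ b ∧ ¬ circEdge a b x)
    (z : 𝕋) {u₁ u₂ : 𝕋} (hu₁ : u₁ ∈ U) (hu₂ : u₂ ∈ U)
    (hlt : circPos (u₁ + π - z) < circPos (u₂ + π - z)) :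
    ∃ c ∈ U, circPos (u₁ + π - z) < circPos (c - z) ∧ circPos (c - z) < circPos (u₂ + π - z) := by
  have hne : u₁ ≠ u₂ := by rintro rfl; exact lt_irrefl _ hlt
  have hanti : u₂ + π ≠ u₁ + π + π := by
    rw [add_assoc, coe_pi_add_coe_pi, add_zero]
    exact fun h => hU u₂ hu₂ u₁ hu₁ h.symm
  rcases circTo_or_circTo_of_ne ((add_left_injective _).ne hne) hanti with h | h
  · obtain ⟨c, hc, hcu₁, hcu₂, hE⟩ := hbal u₁ hu₁ u₂ hu₂ hne
    obtain ⟨hu₂c, hcu₁⟩ := circTo_of_not_circEdge ((circTo_add_right _).1 h) hcu₁ hcu₂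
      (hU u₁ hu₁ c hc) (hU u₂ hu₂ c hc) hE
    exact ⟨c, hc, circPos_sub_mem_Ioo_of_circTo z (circTo_iff_add_pi_circTo.1 hcu₁)
      (circTo_iff_circTo_add_pi.1 hu₂c) hlt⟩
  · rw [circTo_iff_circPos z] at h
    have hfar : circPos (u₁ + π - z) + π < circPos (u₂ + π - z) := by
      rcases h with ⟨h, -⟩ | h
      exacts [absurd h hlt.not_gt, h]
    have := circPos_nonneg (u₁ + π - z)
    have := circPos_lt_two_pi (u₂ + π - z)
    have hpos : circPos (u₂ - z) = circPos (u₂ + π - z) - π := by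
      rw [circPos_eq_iff (by linarith) (by linarith [pi_pos]), AddCircle.coe_sub, coe_circPos]
      abel
    exact ⟨u₂, hu₂, by rw [hpos]; constructor <;> linarith [pi_pos]⟩

lemma card_filter_eq_or_circTo {U : Finset 𝕋} {z : 𝕋} (hz : z ∈ U) :
    #(U.filter (fun u => u = z ∨ circTo z u)) = #(U.filter (circTo z ·)) + 1 := by
  rw [filter_or, filter_eq' U z, if_pos hz, card_union_of_disjoint, card_singleton, add_comm]
  simp [circTo_irrefl]

lemma card_filter_eq_or_circTo_add_card_filter_circTo {U : Finset 𝕋}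
    (hU : ∀ x ∈ U, ∀ y ∈ U, y ≠ x + π) {z : 𝕋} (hz : z ∈ U) :
    #(U.filter (fun u => u = z ∨ circTo z u)) + #(U.filter (circTo · z)) = #U := by
  rw [← card_filter_add_card_filter_not (s := U) (p := fun u => u = z ∨ circTo z u)]
  congr 2
  refine filter_congr fun u hu => ⟨fun h => ?_, fun h => ?_⟩
  · rintro (rfl | h')
    exacts [circTo_irrefl u h, circTo_asymm h h']
  · rw [not_or] at h
    exact (circTo_or_circTo_of_ne (Ne.symm h.1) (hU z hz u hu)).resolve_left h.2

lemma card_filter_eq_or_circTo_of_balanced {U : Finset 𝕋} (hU : ∀ x ∈ U, ∀ y ∈ U, y ≠ x + π)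
    (hbal : ∀ a ∈ U, ∀ b ∈ U, a ≠ b → ∃ x ∈ U, x ≠ a ∧ x ≠ b ∧ ¬ circEdge a b x)
    {z : 𝕋} (hz : z ∈ U) :
    #(U.filter (fun u => u = z ∨ circTo z u)) = #(U.filter (circTo · z)) + 1 := by
  have hinj : Function.Injective fun u => circPos (u - z) :=
    circPos_injective.comp (sub_left_injective)
  have hinj' : Function.Injective fun u => circPos (u + π - z) :=
    hinj.comp (add_left_injective _)
  have hdisj :
      Disjoint (U.image fun u => circPos (u - z)) (U.image fun u => circPos (u + π - z)) := by
    simp only [disjoint_left, mem_image, not_exists, not_and]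
    rintro _ ⟨u, hu, rfl⟩ v hv h
    exact hU v hv u hu (hinj h).symm
  have hbelow : ∀ b ∈ U.image (fun u => circPos (u + π - z)),
      ∃ a ∈ U.image (fun u => circPos (u - z)), a < b := by
    simp only [mem_image]
    rintro _ ⟨v, hv, rfl⟩
    refine ⟨0, ⟨z, hz, by rw [sub_self, circPos_zero]⟩, (circPos_nonneg _).lt_of_ne' ?_⟩
    rw [Ne, circPos_eq_zero_iff, sub_eq_zero]
    exact fun h => hU v hv z hz h.symm
  have hsep : ∀ b₁ ∈ U.image (fun u => circPos (u + π - z)),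
      ∀ b₂ ∈ U.image (fun u => circPos (u + π - z)), b₁ < b₂ →
        ∃ a ∈ U.image (fun u => circPos (u - z)), b₁ < a ∧ a < b₂ := by
    simp only [mem_image]
    rintro _ ⟨u₁, hu₁, rfl⟩ _ ⟨u₂, hu₂, rfl⟩ hlt
    obtain ⟨c, hc, h⟩ := exists_circPos_sub_mem_Ioo_of_balanced hU hbal z hu₁ hu₂ hlt
    exact ⟨_, ⟨c, hc, rfl⟩, h⟩
  have hπ : π ∈ U.image (fun u => circPos (u + π - z)) := by
    refine mem_image.2 ⟨z, hz, ?_⟩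
    rw [add_sub_cancel_left, circPos_eq_iff pi_pos.le (by linarith [pi_pos])]
  have key := card_filter_lt_eq_add_one_of_separates hdisj
    (by rw [card_image_of_injective _ hinj, card_image_of_injective _ hinj']) hbelow hsep hπ
  have hA : U.filter (fun u => circPos (u - z) < π) = U.filter (fun u => u = z ∨ circTo z u) :=
    filter_congr fun u _ => circPos_sub_lt_pi_iff
  have hB : U.filter (fun u => circPos (u + π - z) < π) = U.filter (circTo · z) := by
    refine filter_congr fun u hu => ?_
    rw [circPos_sub_lt_pi_iff, ← circTo_iff_circTo_add_pi, or_iff_right]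
    exact fun h => hU u hu z hz h.symm
  rwa [filter_image, filter_image, card_image_of_injective _ hinj, card_image_of_injective _ hinj',
    hA, hB] at key

theorem stmt11_general (Z : Set (AddCircle (2 * Real.pi)))
    (hanti : ∀ x ∈ Z, ∀ y ∈ Z,
      y ≠ x + ((Real.pi : ℝ) : AddCircle (2 * Real.pi)))
    (U : Finset (AddCircle (2 * Real.pi))) (hUZ : ↑U ⊆ Z)
    (hbal : ∀ a ∈ U, ∀ b ∈ U, a ≠ b →
      ∃ x ∈ U, x ≠ a ∧ x ≠ b ∧ ¬ circEdge a b x) :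
    ∀ z ∈ U, U.card = 2 * (U.filter (fun y => circTo z y)).card + 1 := by
  intro z hz
  have hU : ∀ x ∈ U, ∀ y ∈ U, y ≠ x + π := fun x hx y hy => hanti x (hUZ hx) y (hUZ hy)
  have hpart := card_filter_eq_or_circTo_add_card_filter_circTo hU hz
  have hbalanced := card_filter_eq_or_circTo_of_balanced hU hbal hz
  have hclosed := card_filter_eq_or_circTo hz
  omega

/-- A finite balanced subset `U` of the dense local order
3-hypergraph has odd size: for any `z ∈ U`, if `z⁺ ∩ U` has `r` elements
then `|U| = 2r + 1`. -/
theorem stmt11 (Z : Set (AddCircle (2 * Real.pi)))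
    (hZcount : Z.Countable) (hZdense : Dense Z)
    (hanti : ∀ x ∈ Z, ∀ y ∈ Z,
      y ≠ x + ((Real.pi : ℝ) : AddCircle (2 * Real.pi)))
    (U : Finset (AddCircle (2 * Real.pi))) (hUZ : ↑U ⊆ Z)
    (hbal : ∀ a ∈ U, ∀ b ∈ U, a ≠ b →
      ∃ x ∈ U, x ≠ a ∧ x ≠ b ∧ ¬ circEdge a b x) :
    ∀ z ∈ U, U.card = 2 * (U.filter (fun y => circTo z y)).card + 1 :=
  stmt11_general Z hanti U hUZ hbal
end

section
/- Let M be the 3-uniform hypergraph on F_7 whose edges are the 14 triples in the AGL_1(7)-orbit of {0,1,3}. Then M is set-homogeneous (with respect to G = AGL_1(7) ≤ Aut(M)): any two isomorphic induced subhypergraphs of M lie in the same Aut(M)-orbit setwise; but M is not homogeneous: there exists an isomorphism between induced subhypergraphs of M which extends to no automorphism of M. -/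
set_option maxRecDepth 40000

/-- The edges of the 3-hypergraph `M` on `F₇`: the `AGL₁(7)`-orbit of
`{0,1,3}`. -/
def M7Edge (S : Finset (ZMod 7)) : Prop :=
  S.card = 3 ∧ ∃ a b : ZMod 7, a ≠ 0 ∧
    S = (({0, 1, 3} : Finset (ZMod 7))).image (fun x => a * x + b)

/-- Automorphisms of the hypergraph `M`. -/
def M7Aut (g : Equiv.Perm (ZMod 7)) : Prop :=
  ∀ S : Finset (ZMod 7), M7Edge (S.image g) ↔ M7Edge S

/-- `f` is an isomorphism of the induced subhypergraph on `U` onto that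
on `V`. -/
def M7Iso (f : ZMod 7 → ZMod 7) (U V : Finset (ZMod 7)) : Prop :=
  Set.BijOn f ↑U ↑V ∧ ∀ S ⊆ U, (M7Edge S ↔ M7Edge (S.image f))

instance : DecidablePred M7Edge := fun S => by unfold M7Edge; infer_instance

/-- The 14 edges, listed explicitly. -/
def edges14 : List (Finset (ZMod 7)) :=
  [{0,1,3},{0,1,5},{0,2,3},{0,2,6},{0,4,5},{0,4,6},{1,2,4},
   {1,2,6},{1,3,4},{1,5,6},{2,3,5},{2,4,5},{3,4,6},{3,5,6}]

/-- Orbit representatives for the action of `AGL₁(7)` on subsets. -/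
def reps : List (Finset (ZMod 7)) :=
  [∅, {0}, {0,1}, {0,1,2}, {0,1,3}, {0,1,2,3}, {0,1,2,4},
   {0,1,2,3,4}, {0,1,2,3,4,5}, {0,1,2,3,4,5,6}]

/-- Number of edges inside a subset. -/
def nE (U : Finset (ZMod 7)) : ℕ := (U.powerset.filter M7Edge).card

lemma edge_iff_mem : ∀ S : Finset (ZMod 7), M7Edge S ↔ S ∈ edges14 := by decide

lemma aff_edges : ∀ a b : ZMod 7, a ≠ 0 → ∀ S ∈ edges14,
    S.image (fun x => a * x + b) ∈ edges14 := by decide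

lemma aff_edges' : ∀ a b : ZMod 7, a ≠ 0 → ∀ S ∈ edges14,
    S.image (fun x => a * (x - b)) ∈ edges14 := by decide

lemma canon : ∀ U : Finset (ZMod 7), ∃ a b : ZMod 7, a ≠ 0 ∧
    U.image (fun x => a * x + b) ∈ reps := by decide

lemma reps_unique : ∀ r₁ ∈ reps, ∀ r₂ ∈ reps,
    r₁.card = r₂.card → nE r₁ = nE r₂ → r₁ = r₂ := by decide

instance : Fact (Nat.Prime 7) := ⟨by norm_num⟩

/-- The affine permutation `x ↦ a x + b` for `a ≠ 0`. -/
def affPerm (a b : ZMod 7) (ha : a ≠ 0) : Equiv.Perm (ZMod 7) where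
  toFun := fun x => a * x + b
  invFun := fun y => a⁻¹ * (y - b)
  left_inv := fun x => by
    simp only [add_sub_cancel_right, ← mul_assoc, inv_mul_cancel₀ ha, one_mul]
  right_inv := fun y => by
    simp only [← mul_assoc, mul_inv_cancel₀ ha, one_mul, sub_add_cancel]

lemma aut_of (g : Equiv.Perm (ZMod 7))
    (h1 : ∀ S ∈ edges14, S.image g ∈ edges14)
    (h2 : ∀ S ∈ edges14, S.image g.symm ∈ edges14) : M7Aut g := by
  intro S
  rw [edge_iff_mem, edge_iff_mem]
  constructor
  · intro h
    have h' := h2 _ h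
    rwa [Finset.image_image, Equiv.symm_comp_self, Finset.image_id] at h'
  · exact h1 S

lemma affAut (a b : ZMod 7) (ha : a ≠ 0) : M7Aut (affPerm a b ha) := by
  apply aut_of
  · exact aff_edges a b ha
  · exact aff_edges' a⁻¹ b (inv_ne_zero ha)

lemma aut_trans {g h : Equiv.Perm (ZMod 7)} (hg : M7Aut g) (hh : M7Aut h) :
    M7Aut (g.trans h) := by
  intro S
  have : S.image ⇑(g.trans h) = (S.image g).image h := by
    rw [Finset.image_image]; rfl
  rw [this, hh, hg]

lemma aut_symm {g : Equiv.Perm (ZMod 7)} (hg : M7Aut g) : M7Aut g.symm := by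
  intro S
  have h := hg (S.image g.symm)
  rw [Finset.image_image, Equiv.self_comp_symm, Finset.image_id] at h
  exact h.symm

lemma image_eq_of_iso {f : ZMod 7 → ZMod 7} {U V : Finset (ZMod 7)}
    (h : M7Iso f U V) : U.image f = V :=
  Finset.coe_injective (by rw [Finset.coe_image, h.1.image_eq])

lemma card_eq_of_iso {f : ZMod 7 → ZMod 7} {U V : Finset (ZMod 7)}
    (h : M7Iso f U V) : U.card = V.card := by
  rw [← image_eq_of_iso h, Finset.card_image_of_injOn h.1.injOn]

lemma nE_eq_of_iso {f : ZMod 7 → ZMod 7} {U V : Finset (ZMod 7)}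
    (h : M7Iso f U V) : nE U = nE V := by
  obtain ⟨hbij, hiso⟩ := h
  have hinj : Set.InjOn f ↑U := hbij.injOn
  apply Finset.card_bij (fun S _ => S.image f)
  · intro S hS
    rw [Finset.mem_filter, Finset.mem_powerset] at hS ⊢
    obtain ⟨hSU, hSe⟩ := hS
    constructor
    · intro y hy
      obtain ⟨x, hx, rfl⟩ := Finset.mem_image.1 hy
      exact hbij.mapsTo (hSU hx)
    · exact (hiso S hSU).1 hSe
  · intro S₁ hS₁ S₂ hS₂ h12
    rw [Finset.mem_filter, Finset.mem_powerset] at hS₁ hS₂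
    have h12' : f '' (↑S₁ : Set (ZMod 7)) = f '' (↑S₂ : Set (ZMod 7)) := by
      rw [← Finset.coe_image, ← Finset.coe_image, h12]
    exact Finset.coe_injective ((hinj.image_eq_image_iff
      (Finset.coe_subset.2 hS₁.1) (Finset.coe_subset.2 hS₂.1)).1 h12')
  · intro T hT
    rw [Finset.mem_filter, Finset.mem_powerset] at hT
    obtain ⟨hTV, hTe⟩ := hT
    refine ⟨U.filter (fun x => f x ∈ T), ?_, ?_⟩
    · rw [Finset.mem_filter, Finset.mem_powerset]
      have hsub : U.filter (fun x => f x ∈ T) ⊆ U := Finset.filter_subset _ _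
      have himg : (U.filter (fun x => f x ∈ T)).image f = T := by
        apply Finset.Subset.antisymm
        · intro y hy
          obtain ⟨x, hx, rfl⟩ := Finset.mem_image.1 hy
          exact (Finset.mem_filter.1 hx).2
        · intro y hy
          have hyV : y ∈ (↑V : Set (ZMod 7)) := hTV hy
          rw [← hbij.image_eq] at hyV
          obtain ⟨x, hxU, rfl⟩ := hyV
          exact Finset.mem_image.2 ⟨x, Finset.mem_filter.2 ⟨hxU, hy⟩, rfl⟩
      exact ⟨hsub, (hiso _ hsub).2 (by rwa [himg])⟩
    · apply Finset.Subset.antisymm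
      · intro y hy
        obtain ⟨x, hx, rfl⟩ := Finset.mem_image.1 hy
        exact (Finset.mem_filter.1 hx).2
      · intro y hy
        have hyV : y ∈ (↑V : Set (ZMod 7)) := hTV hy
        rw [← hbij.image_eq] at hyV
        obtain ⟨x, hxU, rfl⟩ := hyV
        exact Finset.mem_image.2 ⟨x, Finset.mem_filter.2 ⟨hxU, hy⟩, rfl⟩

lemma iso_of_aut {g : Equiv.Perm (ZMod 7)} (hg : M7Aut g) (U : Finset (ZMod 7)) :
    M7Iso ⇑g U (U.image g) := by
  constructor
  · rw [Finset.coe_image]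
    exact (g.injective.injOn).bijOn_image
  · intro S _
    exact (hg S).symm

/-- Pointwise facts used in the non-homogeneity argument. -/
def f0 : ZMod 7 → ZMod 7 := fun x =>
  if x = 0 then 1 else if x = 1 then 0 else x

/-- The 3-hypergraph `M` on `F₇` (edges: the orbit of
`{0,1,3}` under `AGL₁(7)`) is set-homogeneous but not homogeneous: isomorphic
induced subhypergraphs lie in the same `Aut(M)`-orbit setwise, but some
isomorphism between induced subhypergraphs extends to no automorphism. -/
theorem stmt16 :
    (∀ (U V : Finset (ZMod 7)) (f : ZMod 7 → ZMod 7), M7Iso f U V →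
      ∃ g : Equiv.Perm (ZMod 7), M7Aut g ∧ U.image g = V) ∧
    (∃ (U V : Finset (ZMod 7)) (f : ZMod 7 → ZMod 7), M7Iso f U V ∧
      ∀ g : Equiv.Perm (ZMod 7), M7Aut g → ∃ x ∈ U, g x ≠ f x) := by
  constructor
  · -- set-homogeneity
    intro U V f hf
    obtain ⟨a₁, b₁, ha₁, hr₁⟩ := canon U
    obtain ⟨a₂, b₂, ha₂, hr₂⟩ := canon V
    set g₁ := affPerm a₁ b₁ ha₁ with hg₁def
    set g₂ := affPerm a₂ b₂ ha₂ with hg₂def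
    have hg₁ : M7Aut g₁ := affAut a₁ b₁ ha₁
    have hg₂ : M7Aut g₂ := affAut a₂ b₂ ha₂
    have hc₁ : ⇑g₁ = fun x => a₁ * x + b₁ := rfl
    have hc₂ : ⇑g₂ = fun x => a₂ * x + b₂ := rfl
    have hm₁ : U.image ⇑g₁ ∈ reps := by rw [hc₁]; exact hr₁
    have hm₂ : V.image ⇑g₂ ∈ reps := by rw [hc₂]; exact hr₂
    have hiso₁ : M7Iso ⇑g₁ U (U.image g₁) := iso_of_aut hg₁ U
    have hiso₂ : M7Iso ⇑g₂ V (V.image g₂) := iso_of_aut hg₂ V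
    have hcard : (U.image ⇑g₁).card = (V.image ⇑g₂).card := by
      rw [← card_eq_of_iso hiso₁, ← card_eq_of_iso hiso₂, card_eq_of_iso hf]
    have hnE : nE (U.image ⇑g₁) = nE (V.image ⇑g₂) := by
      rw [← nE_eq_of_iso hiso₁, ← nE_eq_of_iso hiso₂, nE_eq_of_iso hf]
    have hrr : U.image ⇑g₁ = V.image ⇑g₂ :=
      reps_unique _ hm₁ _ hm₂ hcard hnE
    refine ⟨g₁.trans g₂.symm, aut_trans hg₁ (aut_symm hg₂), ?_⟩
    have : U.image ⇑(g₁.trans g₂.symm) = (U.image ⇑g₁).image ⇑g₂.symm := by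
      rw [Finset.image_image]; rfl
    rw [this, hrr, Finset.image_image, Equiv.symm_comp_self, Finset.image_id]
  · -- non-homogeneity
    refine ⟨{0,1,3}, {0,1,3}, f0, ⟨?_, ?_⟩, ?_⟩
    · -- BijOn
      have himg : ({0,1,3} : Finset (ZMod 7)).image f0 = {0,1,3} := by decide
      have hinv : ∀ x : ZMod 7, f0 (f0 x) = x := by decide
      have hinj : Function.Injective f0 := fun a b h => by
        rw [← hinv a, h, hinv]
      have := (hinj.injOn (s := (↑({0,1,3} : Finset (ZMod 7)) : Set (ZMod 7)))).bijOn_image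
      rwa [← Finset.coe_image, himg] at this
    · -- induced isomorphism
      have haux : ∀ S ∈ ({0,1,3} : Finset (ZMod 7)).powerset,
          (M7Edge S ↔ M7Edge (S.image f0)) := by decide
      exact fun S hS => haux S (Finset.mem_powerset.2 hS)
    · -- no extension to an automorphism
      intro g hg
      by_contra hcon
      push_neg at hcon
      have h0 : g 0 = 1 := by
        have := hcon 0 (by decide); rwa [show f0 0 = 1 from rfl] at this
      have h1 : g 1 = 0 := by
        have := hcon 1 (by decide); rwa [show f0 1 = 0 from rfl] at this
      have h3 : g 3 = 3 := by
        have := hcon 3 (by decide); rwa [show f0 3 = 3 from rfl] at this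
      -- images of specific edges
      have himage : ∀ x y z : ZMod 7,
          ({x, y, z} : Finset (ZMod 7)).image ⇑g = {g x, g y, g z} := by
        intro x y z
        simp [Finset.image_insert]
      have hedge : ∀ S ∈ edges14, S.image ⇑g ∈ edges14 := by
        intro S hS
        exact (edge_iff_mem _).1 ((hg S).2 ((edge_iff_mem S).2 hS))
      -- determine g 5
      have h5 : g 5 = 5 := by
        have hm : ({0,1,5} : Finset (ZMod 7)).image ⇑g ∈ edges14 :=
          hedge _ (by decide)
        rw [himage, h0, h1] at hm
        have hfact : ∀ x : ZMod 7,
            ({1, 0, x} : Finset (ZMod 7)) ∈ edges14 → x = 3 ∨ x = 5 := by decide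
        rcases hfact _ hm with h | h
        · exact absurd (h.trans h3.symm) (g.injective.ne (by decide))
        · exact h
      -- determine g 4
      have h4 : g 4 = 2 := by
        have hm : ({1,3,4} : Finset (ZMod 7)).image ⇑g ∈ edges14 :=
          hedge _ (by decide)
        rw [himage, h1, h3] at hm
        have hfact : ∀ x : ZMod 7,
            ({0, 3, x} : Finset (ZMod 7)) ∈ edges14 → x = 1 ∨ x = 2 := by decide
        rcases hfact _ hm with h | h
        · exact absurd (h.trans h0.symm) (g.injective.ne (by decide))
        · exact h
      -- contradiction with edge {2,3,5}
      have hm : ({2,3,5} : Finset (ZMod 7)).image ⇑g ∈ edges14 :=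
        hedge _ (by decide)
      rw [himage, h3, h5] at hm
      -- determine g 2 first
      have h2 : g 2 = 4 := by
        have hm' : ({0,2,3} : Finset (ZMod 7)).image ⇑g ∈ edges14 :=
          hedge _ (by decide)
        rw [himage, h0, h3] at hm'
        have hfact : ∀ x : ZMod 7,
            ({1, x, 3} : Finset (ZMod 7)) ∈ edges14 → x = 0 ∨ x = 4 := by decide
        rcases hfact _ hm' with h | h
        · exact absurd (h.trans h1.symm) (g.injective.ne (by decide))
        · exact h
      rw [h2] at hm
      exact absurd hm (by decide)
end

section
/- Let (W,C) be a C-set in which W is finite and every 4-subset {x_1,x_2,y_1,y_2} fails to be an 'edge' (i.e. it is not the case that C(x_i;y_1,y_2) and C(y_i;x_1,x_2) all hold for i=1,2), and assume the 2-regularity condition: for distinct x,y,z at least one of C(x;y,z), C(y;x,z), C(z;x,y) holds. Then W can be enumerated as w_1,...,w_n so that C(w_i; w_j, w_k) holds whenever i < j < k. -/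
section Stmt18Aux

variable {W : Type*} [DecidableEq W] (C : W → W → W → Prop)

/-- Auxiliary strict relation: `x` is "below" the pair `{y, z}` for some genuine witness. -/
def Stmt18Lt (x y : W) : Prop := ∃ z, z ≠ y ∧ C x y z

variable
    (hC1 : ∀ x y z, C x y z → C x z y)
    (hC2 : ∀ x y z, C x y z → ¬ C y x z)
    (hC3 : ∀ x y z w, C x y z → C x w z ∨ C w y z)
    (hC4 : ∀ x y, x ≠ y → C x y y)
    (hreg : ∀ x y z : W, x ≠ y → x ≠ z → y ≠ z → C x y z ∨ C y x z ∨ C z x y)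
    (hnull : ∀ x₁ x₂ y₁ y₂ : W, x₁ ≠ x₂ → x₁ ≠ y₁ → x₁ ≠ y₂ → x₂ ≠ y₁ →
      x₂ ≠ y₂ → y₁ ≠ y₂ →
      ¬ (C x₁ y₁ y₂ ∧ C x₂ y₁ y₂ ∧ C y₁ x₁ x₂ ∧ C y₂ x₁ x₂))

set_option linter.unusedSectionVars false

include hC1 hC2 hC3 hC4 hreg hnull

/-- basic distinctness facts from `C x y z`. -/
theorem stmt18_ne_xy {x y z : W} (h : C x y z) : x ≠ y := by
  rintro rfl; exact hC2 x x z h h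

theorem stmt18_ne_xz {x y z : W} (h : C x y z) : x ≠ z := by
  rintro rfl; exact stmt18_ne_xy C hC1 hC2 hC3 hC4 hreg hnull (hC1 x y x h) rfl

/-- The key consequence of nullity: no "crossing". -/
theorem stmt18_cross {x y z w : W} (hzy : z ≠ y) (hwx : w ≠ x)
    (h1 : C x y z) (h2 : C y x w) : False := by
  have hxy : x ≠ y := stmt18_ne_xy C hC1 hC2 hC3 hC4 hreg hnull h1
  have hxz : x ≠ z := stmt18_ne_xz C hC1 hC2 hC3 hC4 hreg hnull h1
  have hyw : y ≠ w := stmt18_ne_xz C hC1 hC2 hC3 hC4 hreg hnull h2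
  by_cases hzw : z = w
  · subst hzw; exact hC2 x y z h1 h2
  -- derive C w y z
  have hwyz : C w y z := by
    rcases hC3 x z y w (hC1 x y z h1) with h | h
    · exact absurd h2 (hC2 x y w (hC1 x w y h))
    · exact hC1 w z y h
  -- derive C z x w
  have hzxw : C z x w := by
    rcases hC3 y w x z (hC1 y x w h2) with h | h
    · exact absurd (hC1 y z x h) (fun hh => hC2 x y z h1 hh)
    · exact hC1 z w x h
  exact hnull x w y z (Ne.symm hwx) hxy hxz (Ne.symm hyw) (fun hh => hzw hh.symm) hzy.symm
    ⟨h1, hwyz, h2, hzxw⟩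

theorem stmt18_asymm {x y : W} (h1 : Stmt18Lt C x y) (h2 : Stmt18Lt C y x) : False := by
  obtain ⟨z, hz, hxyz⟩ := h1
  obtain ⟨w, hw, hyxw⟩ := h2
  exact stmt18_cross C hC1 hC2 hC3 hC4 hreg hnull hz hw hxyz hyxw

theorem stmt18_trans {x y u : W} (h1 : Stmt18Lt C x y) (h2 : Stmt18Lt C y u) :
    Stmt18Lt C x u := by
  obtain ⟨z, hz, hxyz⟩ := h1
  obtain ⟨w, hw, hyuw⟩ := h2
  have hxy : x ≠ y := stmt18_ne_xy C hC1 hC2 hC3 hC4 hreg hnull hxyz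
  have hyu : y ≠ u := stmt18_ne_xy C hC1 hC2 hC3 hC4 hreg hnull hyuw
  by_cases hxu : x = u
  · subst hxu
    exact (stmt18_asymm C hC1 hC2 hC3 hC4 hreg hnull ⟨z, hz, hxyz⟩ ⟨w, hw, hyuw⟩).elim
  rcases hreg x y u hxy hxu hyu with h | h | h
  · exact ⟨y, hyu, hC1 x y u h⟩
  · exact absurd (stmt18_asymm C hC1 hC2 hC3 hC4 hreg hnull ⟨z, hz, hxyz⟩ ⟨u, Ne.symm hxu, h⟩) id
  · exact absurd (stmt18_asymm C hC1 hC2 hC3 hC4 hreg hnull ⟨w, hw, hyuw⟩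
      ⟨x, hxy, hC1 u x y h⟩) id

/-- A nonempty finite set has a `Stmt18Lt`-minimal element. -/
theorem stmt18_exists_min (s : Finset W) (hs : s.Nonempty) :
    ∃ m ∈ s, ∀ y ∈ s, ¬ Stmt18Lt C y m := by
  classical
  induction s using Finset.induction_on with
  | empty => exact absurd hs (by simp)
  | @insert a t ha ih =>
    by_cases ht : t.Nonempty
    · obtain ⟨m, hm, hmin⟩ := ih ht
      by_cases ham : Stmt18Lt C a m
      · refine ⟨a, Finset.mem_insert_self a t, ?_⟩
        intro y hy hya
        rcases Finset.mem_insert.mp hy with rfl | hy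
        · exact stmt18_asymm C hC1 hC2 hC3 hC4 hreg hnull hya hya
        · exact hmin y hy (stmt18_trans C hC1 hC2 hC3 hC4 hreg hnull hya ham)
      · refine ⟨m, Finset.mem_insert_of_mem hm, ?_⟩
        intro y hy hym
        rcases Finset.mem_insert.mp hy with rfl | hy
        · exact ham hym
        · exact hmin y hy hym
    · refine ⟨a, Finset.mem_insert_self a t, ?_⟩
      intro y hy hya
      rcases Finset.mem_insert.mp hy with rfl | hy
      · exact stmt18_asymm C hC1 hC2 hC3 hC4 hreg hnull hya hya
      · exact ht ⟨y, hy⟩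

/-- A minimal element is an apex of every triple containing it. -/
theorem stmt18_min_apex {s : Finset W} {m : W}
    (hmin : ∀ y ∈ s, ¬ Stmt18Lt C y m) :
    ∀ y ∈ s, ∀ z ∈ s, y ≠ m → z ≠ m → C m y z := by
  intro y hy z hz hym hzm
  by_cases hyz : y = z
  · subst hyz; exact hC4 m y (Ne.symm hym)
  rcases hreg m y z (Ne.symm hym) (Ne.symm hzm) hyz with h | h | h
  · exact h
  · exact absurd ⟨z, hzm, h⟩ (hmin y hy)
  · exact absurd ⟨y, hym, h⟩ (hmin z hz)

/-- Main construction: every finset can be listed compatibly. -/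
theorem stmt18_build : ∀ (n : ℕ) (s : Finset W), s.card = n →
    ∃ l : List W, l.Nodup ∧ l.toFinset = s ∧
      ∀ i j k : ℕ, ∀ (hij : i < j) (hjk : j < k) (hk : k < l.length),
        C (l[i]'(by omega)) (l[j]'(by omega)) (l[k]'hk) := by
  intro n
  induction n with
  | zero =>
    intro s hs
    refine ⟨[], by simp, by simpa using (Finset.card_eq_zero.mp hs).symm, ?_⟩
    intro i j k hij hjk hk; simp at hk
  | succ n ih =>
    intro s hs
    have hne : s.Nonempty := Finset.card_pos.mp (by omega)
    obtain ⟨m, hm, hmin⟩ := stmt18_exists_min C hC1 hC2 hC3 hC4 hreg hnull s hne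
    obtain ⟨l, hnd, hl, hP⟩ := ih (s.erase m) (by rw [Finset.card_erase_of_mem hm]; omega)
    have hmem : ∀ w ∈ l, w ∈ s ∧ w ≠ m := by
      intro w hw
      have : w ∈ s.erase m := hl ▸ List.mem_toFinset.mpr hw
      exact ⟨Finset.mem_of_mem_erase this, Finset.ne_of_mem_erase this⟩
    refine ⟨m :: l, ?_, ?_, ?_⟩
    · exact List.nodup_cons.mpr ⟨fun hml => (hmem m hml).2 rfl, hnd⟩
    · rw [List.toFinset_cons, hl, Finset.insert_erase hm]
    · intro i j k hij hjk hk
      match i, j, k with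
      | 0, j + 1, k + 1 =>
        simp only [List.getElem_cons_zero, List.getElem_cons_succ]
        have hkl : k < l.length := by simpa using hk
        have hy := hmem (l[j]'(by omega)) (List.getElem_mem _)
        have hz := hmem (l[k]'hkl) (List.getElem_mem _)
        exact stmt18_min_apex C hC1 hC2 hC3 hC4 hreg hnull hmin _ hy.1 _ hz.1 hy.2 hz.2
      | i + 1, j + 1, k + 1 =>
        simp only [List.getElem_cons_succ]
        exact hP i j k (by omega) (by omega) (by simpa using hk)

end Stmt18Aux

/-- A finite 2-regular C-set `(W,C)` which is null (no 4-subset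
is an edge of the derived 4-hypergraph) can be enumerated as `w₁,…,wₙ` with
`C(wᵢ;wⱼ,wₖ)` whenever `i < j < k`. -/
theorem stmt18 (W : Type*) [Fintype W] [DecidableEq W]
    (C : W → W → W → Prop)
    (hC1 : ∀ x y z, C x y z → C x z y)
    (hC2 : ∀ x y z, C x y z → ¬ C y x z)
    (hC3 : ∀ x y z w, C x y z → C x w z ∨ C w y z)
    (hC4 : ∀ x y, x ≠ y → C x y y)
    (hreg : ∀ x y z : W, x ≠ y → x ≠ z → y ≠ z → C x y z ∨ C y x z ∨ C z x y)
    (hnull : ∀ x₁ x₂ y₁ y₂ : W, x₁ ≠ x₂ → x₁ ≠ y₁ → x₁ ≠ y₂ → x₂ ≠ y₁ →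
      x₂ ≠ y₂ → y₁ ≠ y₂ →
      ¬ (C x₁ y₁ y₂ ∧ C x₂ y₁ y₂ ∧ C y₁ x₁ x₂ ∧ C y₂ x₁ x₂)) :
    ∃ e : Fin (Fintype.card W) ≃ W,
      ∀ i j k : Fin (Fintype.card W), i < j → j < k →
        C (e i) (e j) (e k) := by
  classical
  obtain ⟨l, hnd, hl, hP⟩ := stmt18_build C hC1 hC2 hC3 hC4 hreg hnull
    (Fintype.card W) Finset.univ (by simp)
  have hlen : l.length = Fintype.card W := by
    rw [← List.toFinset_card_of_nodup hnd, hl, Finset.card_univ]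
  have hinj : Function.Injective fun i : Fin (Fintype.card W) =>
      l.get (Fin.cast hlen.symm i) := by
    intro a b hab
    have := (List.nodup_iff_injective_get.mp hnd) hab
    simpa [Fin.ext_iff] using this
  have hsurj : Function.Surjective fun i : Fin (Fintype.card W) =>
      l.get (Fin.cast hlen.symm i) := by
    intro w
    have hw : w ∈ l := by
      have : w ∈ l.toFinset := hl ▸ Finset.mem_univ w
      exact List.mem_toFinset.mp this
    obtain ⟨i, hi⟩ := List.mem_iff_get.mp hw
    exact ⟨Fin.cast hlen i, by simpa using hi⟩
  refine ⟨Equiv.ofBijective _ ⟨hinj, hsurj⟩, ?_⟩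
  intro i j k hij hjk
  have hk : (k : ℕ) < l.length := by omega
  simpa [Equiv.ofBijective, List.get_eq_getElem] using
    hP i j k (by exact_mod_cast hij) (by exact_mod_cast hjk) hk
end

section
/- Let k ≥ 4 and let (H,E) be a ≤(k+1)-set-homogeneous countably infinite k-uniform hypergraph whose automorphism group preserves a total order < on H, such that H contains both an edge and a non-edge and < is dense. Then for any i,j ∈ {1,...,k+1} with |i−j| ≥ 2, there exist u_1 < ... < u_{k+1} in H such that {u_1,...,u_{k+1}}∖{u_i} is an edge and {u_1,...,u_{k+1}}∖{u_j} is a non-edge. -/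
open Finset

section Aux

variable {H : Type*} [LinearOrder H]

/-- Transitivity on small sets: any two finsets of equal cardinality `≤ k-1`
are related by an `E`-preserving, strictly monotone permutation. -/
lemma trans_small (k : ℕ) (E : Finset H → Prop)
    (huniform : ∀ s, E s → s.card = k)
    (hordinv : ∀ g : H ≃ H, (∀ s : Finset H, E (s.image g) ↔ E s) →
      StrictMono g)
    (hsethom : ∀ U V : Finset H, U.card ≤ k + 1 →
      (∃ f : H → H, Set.BijOn f ↑U ↑V ∧ ∀ s ⊆ U, (E s ↔ E (s.image f))) →
      ∃ g : H ≃ H, (∀ s : Finset H, E (s.image g) ↔ E s) ∧ U.image g = V)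
    (U V : Finset H) (hUV : U.card = V.card) (hle : U.card ≤ k - 1) (hk : 4 ≤ k) :
    ∃ g : H ≃ H, (∀ s : Finset H, E (s.image g) ↔ E s) ∧ U.image g = V ∧ StrictMono g := by
  classical
  have hcards : Fintype.card ↑U = Fintype.card ↑V := by
    rw [Fintype.card_coe, Fintype.card_coe, hUV]
  let e : ↥U ≃ ↥V := Fintype.equivOfCardEq hcards
  let f : H → H := fun z => if h : z ∈ U then (e ⟨z, h⟩ : H) else z
  have hbij : Set.BijOn f ↑U ↑V := by
    refine ⟨?_, ?_, ?_⟩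
    · intro z hz
      simp only [Finset.mem_coe] at hz
      simp only [f, dif_pos hz]
      exact (e ⟨z, hz⟩).2
    · intro z1 h1 z2 h2 hfz
      simp only [Finset.mem_coe] at h1 h2
      simp only [f, dif_pos h1, dif_pos h2] at hfz
      have : e ⟨z1, h1⟩ = e ⟨z2, h2⟩ := Subtype.ext hfz
      have := e.injective this
      exact congrArg Subtype.val this
    · intro v hv
      simp only [Finset.mem_coe] at hv
      refine ⟨(e.symm ⟨v, hv⟩ : H), (e.symm ⟨v, hv⟩).2, ?_⟩
      simp only [f, dif_pos (e.symm ⟨v, hv⟩).2]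
      rw [Subtype.coe_eta]
      rw [e.apply_symm_apply]
  have hpat : ∀ s ⊆ U, (E s ↔ E (s.image f)) := by
    intro s hs
    have h1 : s.card ≤ k - 1 := le_trans (Finset.card_le_card hs) hle
    constructor
    · intro hEs
      have := huniform s hEs; omega
    · intro hEs
      have := huniform _ hEs
      have : (s.image f).card ≤ s.card := Finset.card_image_le
      omega
  obtain ⟨g, hgE, hgUV⟩ := hsethom U V (by omega) ⟨f, hbij, hpat⟩
  exact ⟨g, hgE, hgUV, hordinv g hgE⟩

/-- Insertion lemma: given a `k`-set `S` and a `(k-1)`-set `T` and a position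
`c`, there is a point `x` lying in the `c`-th gap of `T` such that
`insert x T` has the same edge status as `S`. -/
lemma insertion (k : ℕ) (E : Finset H → Prop)
    (huniform : ∀ s, E s → s.card = k)
    (hordinv : ∀ g : H ≃ H, (∀ s : Finset H, E (s.image g) ↔ E s) →
      StrictMono g)
    (hsethom : ∀ U V : Finset H, U.card ≤ k + 1 →
      (∃ f : H → H, Set.BijOn f ↑U ↑V ∧ ∀ s ⊆ U, (E s ↔ E (s.image f))) →
      ∃ g : H ≃ H, (∀ s : Finset H, E (s.image g) ↔ E s) ∧ U.image g = V)
    (hk : 4 ≤ k)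
    (S T : Finset H) (hS : S.card = k) (hT : T.card = k - 1) (c : Fin k) :
    ∃ x, x ∉ T ∧ (E (insert x T) ↔ E S) ∧
      (∀ (v : ℕ) (hv : v < k - 1), v < c.val → T.orderEmbOfFin hT ⟨v, hv⟩ < x) ∧
      (∀ (v : ℕ) (hv : v < k - 1), c.val ≤ v → x < T.orderEmbOfFin hT ⟨v, hv⟩) := by
  classical
  have hck : c.val < k := c.isLt
  set s : Fin k → H := fun r => S.orderEmbOfFin hS r with hs_def
  have hsmono : StrictMono s := (S.orderEmbOfFin hS).strictMono
  have hsmem : ∀ r, s r ∈ S := fun r => Finset.orderEmbOfFin_mem S hS r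
  set sc := s c with hsc_def
  set U := S.erase sc with hU_def
  have hscS : sc ∈ S := hsmem c
  have hU : U.card = k - 1 := by rw [hU_def, Finset.card_erase_of_mem hscS, hS]
  obtain ⟨g, hgE, hgUT, hgmono⟩ := trans_small k E huniform hordinv hsethom U T
    (by rw [hU, hT]) (by omega) hk
  -- the skip map: enumerate `S \ {s c}`
  set sk : Fin (k - 1) → Fin k := fun r =>
    if h : r.val < c.val then ⟨r.val, by omega⟩ else ⟨r.val + 1, by have := r.isLt; omega⟩
    with hsk_def
  have hskval : ∀ r : Fin (k - 1), (sk r).val = if r.val < c.val then r.val else r.val + 1 := by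
    intro r
    simp only [hsk_def]
    split_ifs <;> rfl
  have hskmono : StrictMono sk := by
    intro r1 r2 h12
    have h12' : r1.val < r2.val := h12
    rw [Fin.lt_def, hskval, hskval]
    split_ifs <;> omega
  have hskne : ∀ r, sk r ≠ c := by
    intro r hr
    have := congrArg Fin.val hr
    rw [hskval] at this
    split_ifs at this <;> omega
  have hUe : (fun r : Fin (k - 1) => s (sk r)) = ⇑(U.orderEmbOfFin hU) := by
    apply Finset.orderEmbOfFin_unique
    · intro r
      rw [hU_def]
      exact Finset.mem_erase.2 ⟨fun hh => (hskne r)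
        ((S.orderEmbOfFin hS).injective hh), hsmem _⟩
    · exact hsmono.comp hskmono
  have hTe : (fun r : Fin (k - 1) => g (U.orderEmbOfFin hU r)) = ⇑(T.orderEmbOfFin hT) := by
    apply Finset.orderEmbOfFin_unique
    · intro r
      rw [← hgUT]
      exact Finset.mem_image_of_mem _ (Finset.orderEmbOfFin_mem U hU r)
    · exact hgmono.comp (U.orderEmbOfFin hU).strictMono
  have hTval : ∀ r : Fin (k - 1), T.orderEmbOfFin hT r = g (s (sk r)) := by
    intro r
    rw [← congrFun hTe r, ← congrFun hUe r]
  refine ⟨g sc, ?_, ?_, ?_, ?_⟩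
  · intro hmem
    rw [← hgUT] at hmem
    obtain ⟨u, hu, hgu⟩ := Finset.mem_image.1 hmem
    have : u = sc := g.injective hgu
    rw [this] at hu
    exact (Finset.notMem_erase sc S) hu
  · have hins : insert (g sc) T = S.image g := by
      rw [← hgUT, ← Finset.image_insert, hU_def, Finset.insert_erase hscS]
    rw [hins]
    exact hgE S
  · intro v hv hvc
    rw [hTval ⟨v, hv⟩]
    apply hgmono
    apply hsmono
    rw [Fin.lt_def, hskval]
    simp only []
    split_ifs <;> omega
  · intro v hv hvc
    rw [hTval ⟨v, hv⟩]
    apply hgmono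
    apply hsmono
    rw [Fin.lt_def, hskval]
    simp only []
    split_ifs <;> omega

/-- Assembly: given a `(k-1)`-set `T` and points `x`, `y` in the gaps
`α` and `β - 1` respectively (with `α + 2 ≤ β`), the `(k+1)`-set
`T ∪ {x,y}` lists `x` at position `α` and `y` at position `β`. -/
lemma assemble (k : ℕ) (hk : 4 ≤ k) (α β : Fin (k + 1)) (hab : α.val + 2 ≤ β.val)
    (T : Finset H) (hT : T.card = k - 1) (x y : H) (hxT : x ∉ T) (hyT : y ∉ T)
    (hx1 : ∀ (v : ℕ) (hv : v < k - 1), v < α.val → T.orderEmbOfFin hT ⟨v, hv⟩ < x)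
    (hx2 : ∀ (v : ℕ) (hv : v < k - 1), α.val ≤ v → x < T.orderEmbOfFin hT ⟨v, hv⟩)
    (hy1 : ∀ (v : ℕ) (hv : v < k - 1), v < β.val - 1 → T.orderEmbOfFin hT ⟨v, hv⟩ < y)
    (hy2 : ∀ (v : ℕ) (hv : v < k - 1), β.val - 1 ≤ v → y < T.orderEmbOfFin hT ⟨v, hv⟩) :
    ∃ u : Fin (k + 1) → H, StrictMono u ∧
      (Finset.univ.erase α).image u = insert y T ∧
      (Finset.univ.erase β).image u = insert x T := by
  classical
  have hbk : β.val ≤ k := by have := β.isLt; omega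
  have hxy : x < y :=
    lt_trans (hx2 α.val (by omega) le_rfl) (hy1 α.val (by omega) (by omega))
  set t : Fin (k - 1) → H := fun r => T.orderEmbOfFin hT r with ht_def
  have htmono : StrictMono t := (T.orderEmbOfFin hT).strictMono
  have htmem : ∀ r, t r ∈ T := fun r => Finset.orderEmbOfFin_mem T hT r
  set Y : Finset H := insert x (insert y T) with hY_def
  have hxyT : x ∉ insert y T := by
    simp only [Finset.mem_insert]
    push_neg
    exact ⟨ne_of_lt hxy, hxT⟩
  have hyxT : y ∉ insert x T := by
    simp only [Finset.mem_insert]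
    push_neg
    exact ⟨(ne_of_lt hxy).symm, hyT⟩
  set f : Fin (k + 1) → H := fun m =>
    if h1 : m.val < α.val then t ⟨m.val, by omega⟩
    else if h2 : m.val = α.val then x
    else if h3 : m.val < β.val then t ⟨m.val - 1, by omega⟩
    else if h4 : m.val = β.val then y
    else t ⟨m.val - 2, by have := m.isLt; omega⟩ with hf_def
  have hfα : f α = x := by
    simp [hf_def]
  have hfβ : f β = y := by
    have h1 : ¬ (β.val < α.val) := by omega
    have h2 : ¬ (β.val = α.val) := by omega
    simp [hf_def, h1, h2]
    exact fun h => absurd (Fin.lt_def.mp h) h1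
  have hmono : StrictMono f := by
    intro m n hmn
    have hmn' : m.val < n.val := hmn
    simp only [hf_def]
    split_ifs <;>
      first
        | (exfalso; omega)
        | exact htmono (Fin.mk_lt_mk.mpr (by omega))
        | exact hx1 _ _ (by omega)
        | exact hx2 _ _ (by omega)
        | exact hy1 _ _ (by omega)
        | exact hy2 _ _ (by omega)
        | exact hxy
  have hmem : ∀ m, f m ∈ Y := by
    intro m
    simp only [hf_def]
    split_ifs <;>
      first
        | exact Finset.mem_insert_of_mem (Finset.mem_insert_of_mem (htmem _))
        | exact Finset.mem_insert_self _ _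
        | exact Finset.mem_insert_of_mem (Finset.mem_insert_self _ _)
  have hYcard : Y.card = k + 1 := by
    rw [hY_def, Finset.card_insert_of_notMem hxyT, Finset.card_insert_of_notMem hyT, hT]
    omega
  have himg : Finset.univ.image f = Y := by
    apply Finset.eq_of_subset_of_card_le
    · intro z hz
      obtain ⟨m, _, rfl⟩ := Finset.mem_image.1 hz
      exact hmem m
    · rw [hYcard, Finset.card_image_of_injective _ hmono.injective,
        Finset.card_univ, Fintype.card_fin]
  refine ⟨f, hmono, ?_, ?_⟩
  · rw [Finset.image_erase hmono.injective, himg, hfα, hY_def,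
      Finset.erase_insert hxyT]
  · rw [Finset.image_erase hmono.injective, himg, hfβ, hY_def,
      Finset.insert_comm, Finset.erase_insert hyxT]

end Aux

/-- Let `k ≥ 4` and let `(H,E)` be a ≤(k+1)-set-homogeneous
countably infinite k-uniform hypergraph whose automorphism group preserves a
dense total order `<`, containing an edge and a non-edge.  Then for any
positions `i,j` with `|i - j| ≥ 2` there is an increasing (k+1)-tuple
`u₁ < … < u_{k+1}` such that deleting `uᵢ` gives an edge and deleting `uⱼ`
gives a non-edge. -/
theorem stmt19 {H : Type*} [LinearOrder H] [DenselyOrdered H]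
    [Countable H] [Infinite H]
    (k : ℕ) (hk : 4 ≤ k)
    (E : Finset H → Prop)
    (huniform : ∀ s, E s → s.card = k)
    (hordinv : ∀ g : H ≃ H, (∀ s : Finset H, E (s.image g) ↔ E s) →
      StrictMono g)
    (hsethom : ∀ U V : Finset H, U.card ≤ k + 1 →
      (∃ f : H → H, Set.BijOn f ↑U ↑V ∧ ∀ s ⊆ U, (E s ↔ E (s.image f))) →
      ∃ g : H ≃ H, (∀ s : Finset H, E (s.image g) ↔ E s) ∧ U.image g = V)
    (hedge : ∃ s : Finset H, E s)
    (hnonedge : ∃ s : Finset H, s.card = k ∧ ¬ E s) :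
    ∀ i j : Fin (k + 1), (i.val + 2 ≤ j.val ∨ j.val + 2 ≤ i.val) →
      ∃ u : Fin (k + 1) → H, StrictMono u ∧
        E ((Finset.univ.erase i).image u) ∧
        ¬ E ((Finset.univ.erase j).image u) := by
  classical
  obtain ⟨S, hSE⟩ := hedge
  have hSk : S.card = k := huniform S hSE
  obtain ⟨N, hNk, hNE⟩ := hnonedge
  obtain ⟨T, hT⟩ := Finset.exists_card_eq (α := H) (k - 1)
  intro i j hij
  rcases hij with hij | hij
  · -- i + 2 ≤ j : delete `i`-th gives edge, delete `j`-th gives non-edge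
    have hjk : j.val ≤ k := by have := j.isLt; omega
    obtain ⟨x, hxT, hxE, hx1, hx2⟩ := insertion k E huniform hordinv hsethom hk
      N T hNk hT ⟨i.val, by omega⟩
    obtain ⟨y, hyT, hyE, hy1, hy2⟩ := insertion k E huniform hordinv hsethom hk
      S T hSk hT ⟨j.val - 1, by omega⟩
    obtain ⟨u, hmono, h1, h2⟩ := assemble k hk i j hij T hT x y hxT hyT
      hx1 hx2 hy1 hy2
    refine ⟨u, hmono, ?_, ?_⟩
    · rw [h1]; exact hyE.mpr hSE
    · rw [h2]; exact fun h => hNE (hxE.mp h)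
  · -- j + 2 ≤ i : delete `j`-th gives non-edge, delete `i`-th gives edge
    have hik : i.val ≤ k := by have := i.isLt; omega
    obtain ⟨x, hxT, hxE, hx1, hx2⟩ := insertion k E huniform hordinv hsethom hk
      S T hSk hT ⟨j.val, by omega⟩
    obtain ⟨y, hyT, hyE, hy1, hy2⟩ := insertion k E huniform hordinv hsethom hk
      N T hNk hT ⟨i.val - 1, by omega⟩
    obtain ⟨u, hmono, h1, h2⟩ := assemble k hk j i hij T hT x y hxT hyT
      hx1 hx2 hy1 hy2
    refine ⟨u, hmono, ?_, ?_⟩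
    · rw [h2]; exact hxE.mpr hSE
    · rw [h1]; exact fun h => hNE (hyE.mp h)
end
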